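/- arXiv:2309.09545 — 8 statements merged into one kernel-verified Lean document; each statement's English description precedes it below -/
import Mathlib

section
/- There exists a constant L > 0 such that for all (mu,p), (mu',p') in B and all (w,y), (w',y') in [0,infinity)^2, ||H((mu,p),(w,y)) - H((mu',p'),(w',y'))|| <= L * (||(w,y)|| + 1) * ( ||(w,y) - (w',y')|| + ||(mu,p) - (mu',p')|| ). -/
open Set

/-- Euclidean norm on `ℝ × ℝ`. -/
noncomputable def euclNorm2 (p : ℝ × ℝ) : ℝ := Real.sqrt (p.1 ^ 2 + p.2 ^ 2)

lemma euclNorm2_nonneg (v : ℝ × ℝ) : 0 ≤ euclNorm2 v := Real.sqrt_nonneg _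

lemma euclNorm2_fst (v : ℝ × ℝ) : |v.1| ≤ euclNorm2 v := by
  rw [euclNorm2, ← Real.sqrt_sq_eq_abs]
  exact Real.sqrt_le_sqrt (by nlinarith [sq_nonneg v.2])

lemma euclNorm2_snd (v : ℝ × ℝ) : |v.2| ≤ euclNorm2 v := by
  rw [euclNorm2, ← Real.sqrt_sq_eq_abs]
  exact Real.sqrt_le_sqrt (by nlinarith [sq_nonneg v.1])

lemma euclNorm2_le (v : ℝ × ℝ) : euclNorm2 v ≤ |v.1| + |v.2| := by
  rw [euclNorm2]
  have h : v.1 ^ 2 + v.2 ^ 2 ≤ (|v.1| + |v.2|) ^ 2 := by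
    nlinarith [sq_abs v.1, sq_abs v.2, mul_nonneg (abs_nonneg v.1) (abs_nonneg v.2)]
  calc Real.sqrt (v.1 ^ 2 + v.2 ^ 2) ≤ Real.sqrt ((|v.1| + |v.2|) ^ 2) :=
        Real.sqrt_le_sqrt h
    _ = |v.1| + |v.2| := Real.sqrt_sq (by positivity)

lemma mul_diff_abs (a a' S S' : ℝ) (hS : 0 ≤ S) :
    |a * S - a' * S'| ≤ |a - a'| * S + |a'| * |S - S'| := by
  have h : a * S - a' * S' = (a - a') * S + a' * (S - S') := by ring
  rw [h]
  calc |(a - a') * S + a' * (S - S')| ≤ |(a - a') * S| + |a' * (S - S')| := abs_add_le _ _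
    _ = |a - a'| * S + |a'| * |S - S'| := by rw [abs_mul, abs_mul, abs_of_nonneg hS]

set_option maxHeartbeats 1000000 in
/-- Lipschitz-type continuity of the gradient estimator `H` for the
GI/GI/1 joint pricing and capacity sizing problem. -/
theorem stmt0
    (h0 : ℝ) (hh0 : 0 < h0)
    (mu_l mu_u p_l p_u : ℝ)
    (hmul : 0 < mu_l) (hmuu : mu_l ≤ mu_u) (hpu : p_l ≤ p_u)
    (lam c : ℝ → ℝ)
    (hlam_diff : Differentiable ℝ lam) (hc_diff : Differentiable ℝ c)
    (hlam_lip : ∃ K : NNReal, LipschitzOnWith K lam (Icc p_l p_u))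
    (hlam'_lip : ∃ K : NNReal, LipschitzOnWith K (deriv lam) (Icc p_l p_u))
    (hc'_lip : ∃ K : NNReal, LipschitzOnWith K (deriv c) (Icc mu_l mu_u))
    (hlam_bdd : ∃ M : ℝ, ∀ x ∈ Icc p_l p_u, |lam x| ≤ M)
    (hlam'_bdd : ∃ M : ℝ, ∀ x ∈ Icc p_l p_u, |deriv lam x| ≤ M)
    (hc'_bdd : ∃ M : ℝ, ∀ x ∈ Icc mu_l mu_u, |deriv c x| ≤ M)
    (H : (ℝ × ℝ) → (ℝ × ℝ) → ℝ × ℝ)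
    (hH : ∀ mu p w y, H (mu, p) (w, y) =
      (-(lam p) - p * deriv lam p + h0 * deriv lam p * (w + y + 1 / mu),
        deriv c mu - h0 * (lam p / mu) * (w + y + 1 / mu))) :
    ∃ L > 0, ∀ mu p mu' p' w y w' y' : ℝ,
      mu ∈ Icc mu_l mu_u → p ∈ Icc p_l p_u →
      mu' ∈ Icc mu_l mu_u → p' ∈ Icc p_l p_u →
      0 ≤ w → 0 ≤ y → 0 ≤ w' → 0 ≤ y' →
      euclNorm2 (H (mu, p) (w, y) - H (mu', p') (w', y')) ≤
        L * (euclNorm2 (w, y) + 1) *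
          (euclNorm2 ((w, y) - (w', y')) + euclNorm2 ((mu, p) - (mu', p'))) := by
  obtain ⟨Kl, hKl⟩ := hlam_lip
  obtain ⟨Kd, hKd⟩ := hlam'_lip
  obtain ⟨Kc, hKc⟩ := hc'_lip
  obtain ⟨M1, hM1⟩ := hlam_bdd
  obtain ⟨M2, hM2⟩ := hlam'_bdd
  obtain ⟨M3, hM3⟩ := hc'_bdd
  have hpl_mem : p_l ∈ Icc p_l p_u := left_mem_Icc.mpr hpu
  have hml_mem : mu_l ∈ Icc mu_l mu_u := left_mem_Icc.mpr hmuu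
  have hM10 : 0 ≤ M1 := le_trans (abs_nonneg _) (hM1 p_l hpl_mem)
  have hM20 : 0 ≤ M2 := le_trans (abs_nonneg _) (hM2 p_l hpl_mem)
  have hKl0 : (0:ℝ) ≤ (Kl:ℝ) := Kl.coe_nonneg
  have hKd0 : (0:ℝ) ≤ (Kd:ℝ) := Kd.coe_nonneg
  have hKc0 : (0:ℝ) ≤ (Kc:ℝ) := Kc.coe_nonneg
  have hil : (0:ℝ) < 1 / mu_l := one_div_pos.mpr hmul
  have hil2 : (0:ℝ) < 1 / mu_l ^ 2 := one_div_pos.mpr (by positivity)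
  -- abbreviations for structural constants
  obtain ⟨Pm, hPm_def⟩ : ∃ x : ℝ, x = |p_l| + |p_u| := ⟨_, rfl⟩
  have hPm0 : 0 ≤ Pm := by rw [hPm_def]; positivity
  obtain ⟨C0, hC0_def⟩ : ∃ x : ℝ, x = 2 + 1 / mu_l := ⟨_, rfl⟩
  obtain ⟨C1, hC1_def⟩ : ∃ x : ℝ, x = 2 + 1 / mu_l ^ 2 := ⟨_, rfl⟩
  have hC00 : 0 < C0 := by rw [hC0_def]; linarith
  have hC10 : 0 < C1 := by rw [hC1_def]; linarith
  refine ⟨(Kl + Pm * Kd + M2 + h0 * Kd * C0 + h0 * M2 * C1)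
      + (Kc + h0 * (Kl * (1 / mu_l) + M1 * (1 / mu_l ^ 2)) * C0 + h0 * (M1 * (1 / mu_l)) * C1)
      + 1, ?_, ?_⟩
  · have t1 : 0 ≤ Pm * Kd := mul_nonneg hPm0 hKd0
    have t2 : 0 ≤ h0 * Kd * C0 := by positivity
    have t3 : 0 ≤ h0 * M2 * C1 := by positivity
    have t4 : 0 ≤ h0 * (Kl * (1 / mu_l) + M1 * (1 / mu_l ^ 2)) * C0 := by
      apply mul_nonneg (mul_nonneg hh0.le _) hC00.le
      have := mul_nonneg hKl0 hil.le
      have := mul_nonneg hM10 hil2.le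
      linarith
    have t5 : 0 ≤ h0 * (M1 * (1 / mu_l)) * C1 := by
      exact mul_nonneg (mul_nonneg hh0.le (mul_nonneg hM10 hil.le)) hC10.le
    linarith
  intro mu p mu' p' w y w' y' hmu hp hmu' hp' hw0 hy0 hw'0 hy'0
  have hmu0 : 0 < mu := lt_of_lt_of_le hmul hmu.1
  have hmu'0 : 0 < mu' := lt_of_lt_of_le hmul hmu'.1
  obtain ⟨N, hN_def⟩ : ∃ x : ℝ, x = euclNorm2 (w, y) := ⟨_, rfl⟩
  obtain ⟨Dw, hDw_def⟩ : ∃ x : ℝ, x = euclNorm2 ((w, y) - (w', y')) := ⟨_, rfl⟩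
  obtain ⟨Dp, hDp_def⟩ : ∃ x : ℝ, x = euclNorm2 ((mu, p) - (mu', p')) := ⟨_, rfl⟩
  rw [← hN_def, ← hDw_def, ← hDp_def]
  have hN0 : 0 ≤ N := hN_def ▸ euclNorm2_nonneg _
  have hDw0 : 0 ≤ Dw := hDw_def ▸ euclNorm2_nonneg _
  have hDp0 : 0 ≤ Dp := hDp_def ▸ euclNorm2_nonneg _
  have hwN : w ≤ N := by
    have := euclNorm2_fst (w, y); rw [abs_of_nonneg hw0] at this; rw [hN_def]; exact this
  have hyN : y ≤ N := by
    have := euclNorm2_snd (w, y); rw [abs_of_nonneg hy0] at this; rw [hN_def]; exact this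
  have hdw : |w - w'| ≤ Dw := by
    have := euclNorm2_fst ((w, y) - (w', y')); rw [hDw_def]; simpa using this
  have hdy : |y - y'| ≤ Dw := by
    have := euclNorm2_snd ((w, y) - (w', y')); rw [hDw_def]; simpa using this
  have hdmu : |mu - mu'| ≤ Dp := by
    have := euclNorm2_fst ((mu, p) - (mu', p')); rw [hDp_def]; simpa using this
  have hdp : |p - p'| ≤ Dp := by
    have := euclNorm2_snd ((mu, p) - (mu', p')); rw [hDp_def]; simpa using this
  -- inverse bounds
  have hinvmu : 1 / mu ≤ 1 / mu_l := one_div_le_one_div_of_le hmul hmu.1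
  have hinvmu' : 1 / mu' ≤ 1 / mu_l := one_div_le_one_div_of_le hmul hmu'.1
  have hinvmu0 : 0 < 1 / mu := one_div_pos.mpr hmu0
  have hinvmu'0 : 0 < 1 / mu' := one_div_pos.mpr hmu'0
  have hinvdiff : |1 / mu - 1 / mu'| ≤ Dp * (1 / mu_l ^ 2) := by
    have heq : 1 / mu - 1 / mu' = (mu' - mu) * (1 / (mu * mu')) := by
      field_simp
    rw [heq, abs_mul]
    have h1 : |mu' - mu| ≤ Dp := by rw [abs_sub_comm]; exact hdmu
    have h2 : |1 / (mu * mu')| ≤ 1 / mu_l ^ 2 := by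
      rw [abs_of_pos (by positivity)]
      apply one_div_le_one_div_of_le (by positivity)
      rw [sq]
      exact mul_le_mul hmu.1 hmu'.1 hmul.le (le_trans hmul.le hmu.1)
    exact mul_le_mul h1 h2 (abs_nonneg _) hDp0
  -- bounds on S and S'
  obtain ⟨S, hS_def⟩ : ∃ x : ℝ, x = w + y + 1 / mu := ⟨_, rfl⟩
  obtain ⟨S', hS'_def⟩ : ∃ x : ℝ, x = w' + y' + 1 / mu' := ⟨_, rfl⟩
  have hS0 : 0 ≤ S := by rw [hS_def]; positivity
  have hSle : S ≤ C0 * (N + 1) := by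
    rw [hS_def, hC0_def]
    have := mul_nonneg hil.le hN0
    linarith [hwN, hyN, hinvmu]
  have hdS : |S - S'| ≤ C1 * (Dw + Dp) := by
    have heq : S - S' = (w - w') + ((y - y') + (1 / mu - 1 / mu')) := by
      rw [hS_def, hS'_def]; ring
    have htri : |S - S'| ≤ |w - w'| + (|y - y'| + |1 / mu - 1 / mu'|) := by
      rw [heq]; exact (abs_add_le _ _).trans (by gcongr; exact abs_add_le _ _)
    have := mul_nonneg hil2.le hDw0
    rw [hC1_def]; linarith [htri, hdw, hdy, hinvdiff]
  -- pointwise bounds from hypotheses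
  have hplam : |lam p| ≤ M1 := hM1 p hp
  have hplam' : |lam p'| ≤ M1 := hM1 p' hp'
  have hpder : |deriv lam p| ≤ M2 := hM2 p hp
  have hpder' : |deriv lam p'| ≤ M2 := hM2 p' hp'
  have hpabs : |p| ≤ Pm := by
    rw [hPm_def, abs_le]
    constructor
    · have := neg_abs_le p_l; have := abs_nonneg p_u; linarith [hp.1]
    · have := le_abs_self p_u; have := abs_nonneg p_l; linarith [hp.2]
  -- Lipschitz estimates
  have hlip1 : |lam p - lam p'| ≤ Kl * Dp := by
    have h := lipschitzOnWith_iff_dist_le_mul.mp hKl p hp p' hp'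
    rw [Real.dist_eq, Real.dist_eq] at h
    exact h.trans (mul_le_mul_of_nonneg_left hdp hKl0)
  have hlip2 : |deriv lam p - deriv lam p'| ≤ Kd * Dp := by
    have h := lipschitzOnWith_iff_dist_le_mul.mp hKd p hp p' hp'
    rw [Real.dist_eq, Real.dist_eq] at h
    exact h.trans (mul_le_mul_of_nonneg_left hdp hKd0)
  have hlip3 : |deriv c mu - deriv c mu'| ≤ Kc * Dp := by
    have h := lipschitzOnWith_iff_dist_le_mul.mp hKc mu hmu mu' hmu'
    rw [Real.dist_eq, Real.dist_eq] at h
    exact h.trans (mul_le_mul_of_nonneg_left hdmu hKc0)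
  -- rewrite H and split the norm
  rw [hH, hH, Prod.mk_sub_mk]
  have hsplit := euclNorm2_le
      ((-(lam p) - p * deriv lam p + h0 * deriv lam p * (w + y + 1 / mu)) -
        (-(lam p') - p' * deriv lam p' + h0 * deriv lam p' * (w' + y' + 1 / mu')),
       (deriv c mu - h0 * (lam p / mu) * (w + y + 1 / mu)) -
        (deriv c mu' - h0 * (lam p' / mu') * (w' + y' + 1 / mu')))
  simp only at hsplit
  refine le_trans hsplit ?_
  -- first component bound
  have hT2 : |p * deriv lam p - p' * deriv lam p'| ≤ Pm * ((Kd:ℝ) * Dp) + Dp * M2 := by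
    have heq : p * deriv lam p - p' * deriv lam p' =
        p * (deriv lam p - deriv lam p') + (p - p') * deriv lam p' := by ring
    rw [heq]
    refine (abs_add_le _ _).trans ?_
    rw [abs_mul, abs_mul]
    have h1 : |p| * |deriv lam p - deriv lam p'| ≤ Pm * ((Kd:ℝ) * Dp) :=
      mul_le_mul hpabs hlip2 (abs_nonneg _) hPm0
    have h2 : |p - p'| * |deriv lam p'| ≤ Dp * M2 :=
      mul_le_mul hdp hpder' (abs_nonneg _) hDp0
    linarith
  have hT3 : |deriv lam p * S - deriv lam p' * S'| ≤
      (Kd:ℝ) * Dp * (C0 * (N + 1)) + M2 * (C1 * (Dw + Dp)) := by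
    refine (mul_diff_abs _ _ _ _ hS0).trans ?_
    have h1 : |deriv lam p - deriv lam p'| * S ≤ (Kd:ℝ) * Dp * (C0 * (N + 1)) :=
      mul_le_mul hlip2 hSle hS0 (by positivity)
    have h2 : |deriv lam p'| * |S - S'| ≤ M2 * (C1 * (Dw + Dp)) :=
      mul_le_mul hpder' hdS (abs_nonneg _) hM20
    linarith
  have hD1 : |(-(lam p) - p * deriv lam p + h0 * deriv lam p * (w + y + 1 / mu)) -
        (-(lam p') - p' * deriv lam p' + h0 * deriv lam p' * (w' + y' + 1 / mu'))| ≤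
      (Kl:ℝ) * Dp + (Pm * ((Kd:ℝ) * Dp) + Dp * M2) +
        h0 * ((Kd:ℝ) * Dp * (C0 * (N + 1)) + M2 * (C1 * (Dw + Dp))) := by
    have heq : (-(lam p) - p * deriv lam p + h0 * deriv lam p * (w + y + 1 / mu)) -
        (-(lam p') - p' * deriv lam p' + h0 * deriv lam p' * (w' + y' + 1 / mu')) =
        -(lam p - lam p') + -(p * deriv lam p - p' * deriv lam p') +
          h0 * (deriv lam p * S - deriv lam p' * S') := by
      rw [hS_def, hS'_def]; ring
    rw [heq]
    have htri : |(-(lam p - lam p') + -(p * deriv lam p - p' * deriv lam p') +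
          h0 * (deriv lam p * S - deriv lam p' * S'))| ≤
        |lam p - lam p'| + |p * deriv lam p - p' * deriv lam p'| +
          h0 * |deriv lam p * S - deriv lam p' * S'| := by
      refine (abs_add_le _ _).trans ?_
      have := abs_add_le (-(lam p - lam p')) (-(p * deriv lam p - p' * deriv lam p'))
      rw [abs_neg, abs_neg] at this
      rw [abs_mul, abs_of_pos hh0]
      linarith
    refine htri.trans ?_
    have := mul_le_mul_of_nonneg_left hT3 hh0.le
    linarith
  -- second component bound
  have hF : |lam p / mu - lam p' / mu'| ≤ (Kl:ℝ) * Dp * (1 / mu_l) + M1 * (Dp * (1 / mu_l ^ 2)) := by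
    have heq : lam p / mu - lam p' / mu' =
        (lam p - lam p') * (1 / mu) + lam p' * (1 / mu - 1 / mu') := by
      field_simp; ring
    rw [heq]
    refine (abs_add_le _ _).trans ?_
    rw [abs_mul, abs_mul]
    have h1 : |lam p - lam p'| * |1 / mu| ≤ (Kl:ℝ) * Dp * (1 / mu_l) := by
      rw [abs_of_pos hinvmu0]
      exact mul_le_mul hlip1 hinvmu hinvmu0.le (by positivity)
    have h2 : |lam p'| * |1 / mu - 1 / mu'| ≤ M1 * (Dp * (1 / mu_l ^ 2)) :=
      mul_le_mul hplam' hinvdiff (abs_nonneg _) hM10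
    linarith
  have hF' : |lam p' / mu'| ≤ M1 * (1 / mu_l) := by
    rw [div_eq_mul_one_div, abs_mul, abs_of_pos hinvmu'0]
    exact mul_le_mul hplam' hinvmu' hinvmu'0.le hM10
  have hT4 : |lam p / mu * S - lam p' / mu' * S'| ≤
      ((Kl:ℝ) * Dp * (1 / mu_l) + M1 * (Dp * (1 / mu_l ^ 2))) * (C0 * (N + 1)) +
        M1 * (1 / mu_l) * (C1 * (Dw + Dp)) := by
    refine (mul_diff_abs _ _ _ _ hS0).trans ?_
    have h1 : |lam p / mu - lam p' / mu'| * S ≤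
        ((Kl:ℝ) * Dp * (1 / mu_l) + M1 * (Dp * (1 / mu_l ^ 2))) * (C0 * (N + 1)) := by
      refine mul_le_mul hF hSle hS0 ?_
      have := mul_nonneg (mul_nonneg hKl0 hDp0) hil.le
      have := mul_nonneg hM10 (mul_nonneg hDp0 hil2.le)
      linarith
    have h2 : |lam p' / mu'| * |S - S'| ≤ M1 * (1 / mu_l) * (C1 * (Dw + Dp)) :=
      mul_le_mul hF' hdS (abs_nonneg _) (by positivity)
    linarith
  have hD2 : |(deriv c mu - h0 * (lam p / mu) * (w + y + 1 / mu)) -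
        (deriv c mu' - h0 * (lam p' / mu') * (w' + y' + 1 / mu'))| ≤
      (Kc:ℝ) * Dp + h0 * (((Kl:ℝ) * Dp * (1 / mu_l) + M1 * (Dp * (1 / mu_l ^ 2))) *
        (C0 * (N + 1)) + M1 * (1 / mu_l) * (C1 * (Dw + Dp))) := by
    have heq : (deriv c mu - h0 * (lam p / mu) * (w + y + 1 / mu)) -
        (deriv c mu' - h0 * (lam p' / mu') * (w' + y' + 1 / mu')) =
        (deriv c mu - deriv c mu') + -(h0 * (lam p / mu * S - lam p' / mu' * S')) := by
      rw [hS_def, hS'_def]; ring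
    rw [heq]
    refine (abs_add_le _ _).trans ?_
    rw [abs_neg, abs_mul, abs_of_pos hh0]
    have := mul_le_mul_of_nonneg_left hT4 hh0.le
    linarith
  -- combine everything
  have hNE : 0 ≤ N * (Dw + Dp) := mul_nonneg hN0 (add_nonneg hDw0 hDp0)
  have hA : Dp ≤ (N + 1) * (Dw + Dp) := by linarith only [hNE, hDw0, hDp0]
  have hB : Dw + Dp ≤ (N + 1) * (Dw + Dp) := by linarith only [hNE, hDw0, hDp0]
  have hC : (N + 1) * Dp ≤ (N + 1) * (Dw + Dp) :=
    mul_le_mul_of_nonneg_left (by linarith) (by linarith)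
  have hE0 : 0 ≤ (N + 1) * (Dw + Dp) := by positivity
  have hm1 : (Kl:ℝ) * Dp ≤ (Kl:ℝ) * ((N + 1) * (Dw + Dp)) :=
    mul_le_mul_of_nonneg_left hA hKl0
  have hm2 : (Pm * (Kd:ℝ)) * Dp ≤ (Pm * (Kd:ℝ)) * ((N + 1) * (Dw + Dp)) :=
    mul_le_mul_of_nonneg_left hA (mul_nonneg hPm0 hKd0)
  have hm3 : M2 * Dp ≤ M2 * ((N + 1) * (Dw + Dp)) :=
    mul_le_mul_of_nonneg_left hA hM20
  have hm4 : (h0 * (Kd:ℝ) * C0) * ((N + 1) * Dp) ≤ (h0 * (Kd:ℝ) * C0) * ((N + 1) * (Dw + Dp)) :=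
    mul_le_mul_of_nonneg_left hC (by positivity)
  have hm5 : (h0 * M2 * C1) * (Dw + Dp) ≤ (h0 * M2 * C1) * ((N + 1) * (Dw + Dp)) :=
    mul_le_mul_of_nonneg_left hB (by positivity)
  have hm6 : (Kc:ℝ) * Dp ≤ (Kc:ℝ) * ((N + 1) * (Dw + Dp)) :=
    mul_le_mul_of_nonneg_left hA hKc0
  have hm7 : (h0 * ((Kl:ℝ) * (1 / mu_l) + M1 * (1 / mu_l ^ 2)) * C0) * ((N + 1) * Dp) ≤
      (h0 * ((Kl:ℝ) * (1 / mu_l) + M1 * (1 / mu_l ^ 2)) * C0) * ((N + 1) * (Dw + Dp)) := by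
    refine mul_le_mul_of_nonneg_left hC ?_
    apply mul_nonneg (mul_nonneg hh0.le _) hC00.le
    have := mul_nonneg hKl0 hil.le
    have := mul_nonneg hM10 hil2.le
    linarith
  have hm8 : (h0 * (M1 * (1 / mu_l)) * C1) * (Dw + Dp) ≤
      (h0 * (M1 * (1 / mu_l)) * C1) * ((N + 1) * (Dw + Dp)) :=
    mul_le_mul_of_nonneg_left hB (by positivity)
  linarith only [hD1, hD2, hm1, hm2, hm3, hm4, hm5, hm6, hm7, hm8, hE0]
end

section
/- There exist constants C_w > 0 and iota_w > 0 (depending only on lambda, mu and the laws of U_0, V_0, but not on n, a, w, y) such that for every n >= 0 and every a > 0, P(W_n >= a) <= C_w * exp( - iota_w * max(a - w, 0) ). -/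
/-!
Unrolling Lindley's recursion, `W n ≤ w + S 0` or `W n ≤ S j` for some `j ≤ n`, where
`S j = ∑_{j ≤ i < n} (V i / mu - U i / lam)`. The increments have negative drift `1/mu - 1/lam`
and a moment generating function `ρ(t)` that is finite near `0`, so `ρ(t) < 1` for some small
`t > 0` (its derivative at `0` is the drift). Chernoff's bound gives
`P(S j ≥ x) ≤ e^{-t x} ρ^{n-j}`, and a union bound over `j` sums a geometric series, giving the
constant `1 / (1 - ρ)`.
-/

open MeasureTheory ProbabilityTheory Filter Topology Finset Real

lemma eventually_nhdsGT_lt_of_hasDerivAt_neg {f : ℝ → ℝ} {f' x : ℝ} (hf : HasDerivAt f f' x)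
    (hf' : f' < 0) : ∀ᶠ y in 𝓝[>] x, f y < f x := by
  have hslope : ∀ᶠ y in 𝓝[>] x, slope f x y < 0 :=
    (hf.tendsto_slope.mono_left (nhdsGT_le_nhdsNE x)).eventually (gt_mem_nhds hf')
  filter_upwards [hslope, self_mem_nhdsWithin] with y hy hxy
  rw [slope_def_field, div_neg_iff] at hy
  rcases hy with ⟨-, hy⟩ | ⟨hy, -⟩
  · linarith [sub_pos.2 (Set.mem_Ioi.1 hxy)]
  · linarith

lemma exists_le_sum_Ico_of_lindley {W ξ : ℕ → ℝ} (hW : ∀ n, W (n + 1) = max (W n + ξ n) 0)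
    (n : ℕ) : ∃ j ≤ n, W n ≤ (if j = 0 then W 0 else 0) + ∑ i ∈ Ico j n, ξ i := by
  induction n with
  | zero => exact ⟨0, le_rfl, by simp⟩
  | succ n ih =>
    obtain ⟨j, hjn, hj⟩ := ih
    rcases le_total (W n + ξ n) 0 with hneg | hpos
    · exact ⟨n + 1, le_rfl, by simp [hW, hneg]⟩
    · refine ⟨j, hjn.trans n.le_succ, ?_⟩
      rw [hW, max_eq_left hpos, sum_Ico_succ_top hjn]
      linarith

lemma sum_range_pow_sub_le_inv_one_sub {ρ : ℝ} (hρ₀ : 0 ≤ ρ) (hρ₁ : ρ < 1) (n : ℕ) :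
    ∑ j ∈ range (n + 1), ρ ^ (n - j) ≤ (1 - ρ)⁻¹ := by
  have h := sum_range_reflect (ρ ^ ·) (n + 1)
  simp only [add_tsub_cancel_right] at h
  rw [h, range_eq_Ico]
  simpa using geom_sum_Ico_le_of_lt_one hρ₀ hρ₁ (m := 0) (n := n + 1)

namespace ProbabilityTheory

variable {Ω : Type*} {m : MeasurableSpace Ω} {μ : Measure Ω} {X Y : Ω → ℝ}

lemma zero_mem_interior_integrableExpSet_of_nonneg [IsFiniteMeasure μ] (hX : 0 ≤ᵐ[μ] X)
    {η : ℝ} (hη : 0 < η) (h : Integrable (fun ω ↦ exp (η * X ω)) μ) :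
    0 ∈ interior (integrableExpSet X μ) := by
  have hneg : Integrable (fun ω ↦ exp (-η * X ω)) μ := by
    refine .of_bound ?_ 1 ?_
    · exact ((aemeasurable_of_aemeasurable_exp_mul hη.ne' h.1.aemeasurable).const_mul _).exp
        |>.aestronglyMeasurable
    · filter_upwards [hX] with ω hω
      simpa [abs_exp] using mul_nonneg hη.le hω
  refine interior_maximal (fun t ht ↦ ?_) isOpen_Ioo (Set.mem_Ioo.2 ⟨neg_lt_zero.2 hη, hη⟩)
  exact integrable_exp_mul_of_le_of_le hneg h ht.1.le ht.2.le

lemma mem_integrableExpSet_const_mul {c t : ℝ} :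
    t ∈ integrableExpSet (fun ω ↦ c * X ω) μ ↔ c * t ∈ integrableExpSet X μ := by
  simp only [integrableExpSet, Set.mem_ofPred_eq, ← mul_assoc, mul_comm t]

lemma hasDerivAt_mgf_const_mul_zero (hX : 0 ∈ interior (integrableExpSet X μ)) (c : ℝ) :
    HasDerivAt (fun t ↦ mgf X μ (c * t)) (μ[X] * c) 0 := by
  have h := hasDerivAt_mgf hX
  simp only [zero_mul, exp_zero, mul_one] at h
  have hlin : HasDerivAt (fun t : ℝ ↦ c * t) c 0 := by
    simpa using (hasDerivAt_id (0 : ℝ)).const_mul c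
  exact h.comp_of_eq 0 hlin (mul_zero c).symm

lemma exists_pos_mgf_mul_mgf_lt_one [IsProbabilityMeasure μ]
    (hX : 0 ∈ interior (integrableExpSet X μ)) (hY : 0 ∈ interior (integrableExpSet Y μ))
    {c d : ℝ} (hdrift : c * μ[X] + d * μ[Y] < 0) :
    ∃ t > 0, c * t ∈ integrableExpSet X μ ∧ d * t ∈ integrableExpSet Y μ ∧
      mgf X μ (c * t) * mgf Y μ (d * t) < 1 := by
  have hderiv : HasDerivAt (fun t ↦ mgf X μ (c * t) * mgf Y μ (d * t))
      (c * μ[X] + d * μ[Y]) 0 := by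
    have h := (hasDerivAt_mgf_const_mul_zero hX c).mul (hasDerivAt_mgf_const_mul_zero hY d)
    simp only [mul_zero, mgf_zero, mul_one, one_mul] at h
    rwa [mul_comm c, mul_comm d]
  have hmem : ∀ {Z : Ω → ℝ} (a : ℝ), 0 ∈ interior (integrableExpSet Z μ) →
      ∀ᶠ t in 𝓝[>] 0, a * t ∈ integrableExpSet Z μ := fun a hZ ↦
    nhdsWithin_le_nhds <| (continuous_const_mul a).tendsto' 0 0 (mul_zero a) |>.eventually <|
      mem_interior_iff_mem_nhds.1 hZ
  have hlt := eventually_nhdsGT_lt_of_hasDerivAt_neg hderiv hdrift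
  simp only [mul_zero, mgf_zero, mul_one] at hlt
  exact (eventually_mem_nhdsWithin.and ((hmem c hX).and ((hmem d hY).and hlt))).exists

lemma measureReal_ge_sum_disjSum_le_exp_mul_pow {Z : ℕ ⊕ ℕ → Ω → ℝ} (hindep : iIndepFun Z μ)
    (hmeas : ∀ k, Measurable (Z k)) (hl : ∀ i, IdentDistrib (Z (.inl i)) (Z (.inl 0)) μ μ)
    (hr : ∀ i, IdentDistrib (Z (.inr i)) (Z (.inr 0)) μ μ) {t : ℝ} (ht : 0 ≤ t)
    (hintl : t ∈ integrableExpSet (Z (.inl 0)) μ) (hintr : t ∈ integrableExpSet (Z (.inr 0)) μ)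
    (s : Finset ℕ) (x : ℝ) :
    μ.real {ω | x ≤ (∑ k ∈ s.disjSum s, Z k) ω} ≤
      exp (-t * x) * (mgf (Z (.inl 0)) μ t * mgf (Z (.inr 0)) μ t) ^ #s := by
  have : IsProbabilityMeasure μ := hindep.isProbabilityMeasure
  have hint : ∀ k, Integrable (fun ω ↦ exp (t * Z k ω)) μ := by
    have hexp : Measurable fun x ↦ exp (t * x) := (measurable_const_mul t).exp
    rintro (i | i)
    exacts [((hl i).comp hexp).integrable_iff.2 hintl, ((hr i).comp hexp).integrable_iff.2 hintr]
  calc μ.real {ω | x ≤ (∑ k ∈ s.disjSum s, Z k) ω}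
      ≤ exp (-t * x) * mgf (∑ k ∈ s.disjSum s, Z k) μ t :=
        measure_ge_le_exp_mul_mgf x ht (hindep.integrable_exp_mul_sum hmeas fun k _ ↦ hint k)
    _ = _ := by
        rw [hindep.mgf_sum hmeas, prod_disjSum, mul_pow,
          prod_eq_pow_card fun i _ ↦ mgf_congr_of_identDistrib _ _ (hl i) t,
          prod_eq_pow_card fun i _ ↦ mgf_congr_of_identDistrib _ _ (hr i) t]

lemma measureReal_ge_sum_Ico_div_sub_div_le {U V : ℕ → Ω → ℝ} {lam mu : ℝ}
    (hUmeas : ∀ n, Measurable (U n)) (hVmeas : ∀ n, Measurable (V n))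
    (hindep : iIndepFun (fun i : ℕ ⊕ ℕ => Sum.elim U V i) μ)
    (hUid : ∀ n, IdentDistrib (U n) (U 0) μ μ) (hVid : ∀ n, IdentDistrib (V n) (V 0) μ μ)
    {t : ℝ} (ht : 0 ≤ t) (hUt : -lam⁻¹ * t ∈ integrableExpSet (U 0) μ)
    (hVt : mu⁻¹ * t ∈ integrableExpSet (V 0) μ) (j n : ℕ) (x : ℝ) :
    μ.real {ω | x ≤ ∑ i ∈ Ico j n, (V i ω / mu - U i ω / lam)} ≤
      exp (-t * x) * (mgf (U 0) μ (-lam⁻¹ * t) * mgf (V 0) μ (mu⁻¹ * t)) ^ (n - j) := by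
  let g : ℕ ⊕ ℕ → ℝ → ℝ := Sum.elim (fun _ x ↦ -lam⁻¹ * x) (fun _ x ↦ mu⁻¹ * x)
  have hg : ∀ k, Measurable (g k) := by
    rintro (i | i) <;> exact measurable_const_mul _
  let Z : ℕ ⊕ ℕ → Ω → ℝ := fun k ↦ g k ∘ Sum.elim U V k
  have hZl : ∀ i, Z (.inl i) = fun ω ↦ -lam⁻¹ * U i ω := fun _ ↦ rfl
  have hZr : ∀ i, Z (.inr i) = fun ω ↦ mu⁻¹ * V i ω := fun _ ↦ rfl
  have hsum : ∀ ω, ∑ i ∈ Ico j n, (V i ω / mu - U i ω / lam) =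
      (∑ k ∈ (Ico j n).disjSum (Ico j n), Z k) ω := by
    intro ω
    rw [Finset.sum_apply, sum_disjSum, ← sum_add_distrib]
    refine sum_congr rfl fun i _ ↦ ?_
    rw [hZl, hZr]
    ring
  have h := measureReal_ge_sum_disjSum_le_exp_mul_pow (Z := Z) (hindep.comp g hg)
    (fun k ↦ (hg k).comp (by rcases k with i | i <;> [exact hUmeas i; exact hVmeas i]))
    (fun i ↦ (hUid i).comp (hg (.inl i))) (fun i ↦ (hVid i).comp (hg (.inr i))) ht
    (by rwa [hZl, mem_integrableExpSet_const_mul]) (by rwa [hZr, mem_integrableExpSet_const_mul])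
    (Ico j n) x
  rwa [hZl, hZr, mgf_const_mul, mgf_const_mul, Nat.card_Ico, ← funext hsum] at h

lemma measureReal_lindley_ge_le [IsFiniteMeasure μ] {W ξ : ℕ → Ω → ℝ} {w t ρ : ℝ} (hw : 0 ≤ w)
    (ht : 0 ≤ t) (hρ₀ : 0 ≤ ρ) (hρ₁ : ρ < 1) (hW0 : ∀ ω, W 0 ω = w)
    (hW : ∀ n ω, W (n + 1) ω = max (W n ω + ξ n ω) 0)
    (hsum : ∀ j n x, μ.real {ω | x ≤ ∑ i ∈ Ico j n, ξ i ω} ≤ exp (-t * x) * ρ ^ (n - j))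
    (n : ℕ) (a : ℝ) :
    μ.real {ω | a ≤ W n ω} ≤ (1 - ρ)⁻¹ * exp (-t * (a - w)) := by
  let c : ℕ → ℝ := fun j ↦ if j = 0 then w else 0
  have hcover : {ω | a ≤ W n ω} ⊆
      ⋃ j ∈ range (n + 1), {ω | a - c j ≤ ∑ i ∈ Ico j n, ξ i ω} := by
    intro ω hω
    obtain ⟨j, hjn, hj⟩ := exists_le_sum_Ico_of_lindley (W := (W · ω)) (hW · ω) n
    rw [hW0] at hj
    exact Set.mem_biUnion (mem_range.2 (Nat.lt_succ_of_le hjn))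
      (show a - c j ≤ _ by linarith [show a ≤ W n ω from hω])
  have hterm : ∀ j, μ.real {ω | a - c j ≤ ∑ i ∈ Ico j n, ξ i ω} ≤
      exp (-t * (a - w)) * ρ ^ (n - j) := by
    intro j
    refine (hsum j n _).trans (mul_le_mul_of_nonneg_right ?_ (pow_nonneg hρ₀ _))
    have hcj : c j ≤ w := by by_cases hj : j = 0 <;> simp [c, hj, hw]
    exact exp_le_exp.2 (by nlinarith)
  calc μ.real {ω | a ≤ W n ω}
      ≤ ∑ j ∈ range (n + 1), μ.real {ω | a - c j ≤ ∑ i ∈ Ico j n, ξ i ω} :=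
        (measureReal_mono hcover (measure_ne_top _ _)).trans (measureReal_biUnion_finset_le _ _)
    _ ≤ ∑ j ∈ range (n + 1), exp (-t * (a - w)) * ρ ^ (n - j) := sum_le_sum fun j _ ↦ hterm j
    _ ≤ exp (-t * (a - w)) * (1 - ρ)⁻¹ := by
        rw [← mul_sum]
        exact mul_le_mul_of_nonneg_left (sum_range_pow_sub_le_inv_one_sub hρ₀ hρ₁ n)
          (exp_pos _).le
    _ = (1 - ρ)⁻¹ * exp (-t * (a - w)) := mul_comm _ _

end ProbabilityTheory

/-- uniform sub-exponential tail bound for the GI/GI/1 waiting-time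
process `W_n` with fixed parameters `0 < lam < mu`. -/
theorem stmt1
    {Ω : Type*} [MeasureSpace Ω] [IsProbabilityMeasure (ℙ : Measure Ω)]
    (U V : ℕ → Ω → ℝ)
    (hUmeas : ∀ n, Measurable (U n)) (hVmeas : ∀ n, Measurable (V n))
    (hindep : iIndepFun
      (fun i : ℕ ⊕ ℕ => Sum.elim U V i) ℙ)
    (hUnonneg : ∀ n ω, 0 ≤ U n ω) (hVnonneg : ∀ n ω, 0 ≤ V n ω)
    (hUid : ∀ n, IdentDistrib (U n) (U 0) ℙ ℙ)
    (hVid : ∀ n, IdentDistrib (V n) (V 0) ℙ ℙ)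
    (hUmean : ∫ ω, U 0 ω ∂ℙ = 1) (hVmean : ∫ ω, V 0 ω ∂ℙ = 1)
    (η : ℝ) (hη : 0 < η)
    (hUexp : Integrable (fun ω => Real.exp (η * U 0 ω)) ℙ)
    (hVexp : Integrable (fun ω => Real.exp (η * V 0 ω)) ℙ)
    (lam mu : ℝ) (hlam : 0 < lam) (hlammu : lam < mu) :
    ∃ Cw > (0 : ℝ), ∃ ιw > (0 : ℝ),
      ∀ w y : ℝ, 0 ≤ w → 0 ≤ y →
      ∀ W Y : ℕ → Ω → ℝ,
        (∀ ω, W 0 ω = w) → (∀ ω, Y 0 ω = y) →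
        (∀ n ω, W (n + 1) ω = max (W n ω + V n ω / mu - U n ω / lam) 0) →
        (∀ n ω, Y (n + 1) ω =
          if 0 < W (n + 1) ω then Y n ω + U n ω / lam else 0) →
        ∀ (n : ℕ) (a : ℝ), 0 < a →
          (ℙ {ω | a ≤ W n ω}).toReal ≤ Cw * Real.exp (-ιw * max (a - w) 0) := by
  have hdrift : -lam⁻¹ * ∫ ω, U 0 ω ∂ℙ + mu⁻¹ * ∫ ω, V 0 ω ∂ℙ < 0 := by
    rw [hUmean, hVmean]
    linarith [inv_strictAnti₀ hlam hlammu]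
  obtain ⟨t, ht, hUt, hVt, hρ⟩ := exists_pos_mgf_mul_mgf_lt_one
    (zero_mem_interior_integrableExpSet_of_nonneg (ae_of_all _ (hUnonneg 0)) hη hUexp)
    (zero_mem_interior_integrableExpSet_of_nonneg (ae_of_all _ (hVnonneg 0)) hη hVexp) hdrift
  have hρ₀ : 0 ≤ mgf (U 0) ℙ (-lam⁻¹ * t) * mgf (V 0) ℙ (mu⁻¹ * t) :=
    mul_nonneg mgf_nonneg mgf_nonneg
  refine ⟨_, inv_pos.2 (sub_pos.2 hρ), t, ht, fun w _ hw _ W _ hW0 _ hW _ n a _ ↦ ?_⟩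
  rcases le_total a w with haw | haw
  · rw [max_eq_right (sub_nonpos.2 haw), mul_zero, exp_zero, mul_one]
    exact measureReal_le_one.trans (one_le_inv₀ (sub_pos.2 hρ) |>.2 (by linarith))
  · rw [max_eq_left (sub_nonneg.2 haw)]
    exact measureReal_lindley_ge_le hw ht.le hρ₀ hρ hW0 (fun n ω ↦ by rw [hW, add_sub_assoc])
      (measureReal_ge_sum_Ico_div_sub_div_le hUmeas hVmeas hindep hUid hVid ht.le hUt hVt) n a
end

section
/- There exist constants gamma > 0 and theta > 0 (depending only on lambda, mu and the laws of U_0, V_0) such that for every real alpha >= 1 and every n >= 0, E[ |W_n^1 - W_n^2|^alpha ] <= ( exp( - max(gamma*n - mu*theta*w1, 0) ) + exp( - max(gamma*n - mu*theta*w2, 0) ) ) * |w1 - w2|^alpha. -/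
/-!
The map `w ↦ max (w + x) 0` is monotone and 1-Lipschitz, so the distance between the two coupled
waiting times never grows. It vanishes once the free walk `S n = ∑ k < n, (V k / μ - U k / λ)`
has dropped below `-w` for the larger initial value `w`: before the upper process is reflected
at `0` it equals `w + S n`, and after that the two processes agree. Hence
`E |W¹ n - W² n| ^ α ≤ (P (-w₁ ≤ S n) + P (-w₂ ≤ S n)) * |w₁ - w₂| ^ α`.

The moment generating function of one increment equals `1` at `0` with derivative
`1 / μ - 1 / λ < 0` there, so at some small `t > 0` it takes a value `r = exp (-γ) < 1`.
Chernoff's bound then gives `P (-w ≤ S n) ≤ exp (t * w) * r ^ n = exp (-(γ * n - t * w))`,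
and `θ = t / μ`.
-/

open MeasureTheory ProbabilityTheory Real Finset Filter Topology

section Lindley

variable {x A B : ℕ → ℝ}

lemma lindley_nonneg (hA : ∀ n, A (n + 1) = max (A n + x n) 0) (hA0 : 0 ≤ A 0) :
    ∀ n, 0 ≤ A n
  | 0 => hA0
  | n + 1 => hA n ▸ le_max_right _ _

lemma abs_lindley_sub_le (hA : ∀ n, A (n + 1) = max (A n + x n) 0)
    (hB : ∀ n, B (n + 1) = max (B n + x n) 0) : ∀ n, |A n - B n| ≤ |A 0 - B 0|
  | 0 => le_rfl
  | n + 1 => by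
    rw [hA, hB]
    exact (abs_max_sub_max_le_abs _ _ _).trans
      (by simpa using abs_lindley_sub_le hA hB n)

lemma lindley_mono (hA : ∀ n, A (n + 1) = max (A n + x n) 0)
    (hB : ∀ n, B (n + 1) = max (B n + x n) 0) (h0 : B 0 ≤ A 0) : ∀ n, B n ≤ A n
  | 0 => h0
  | n + 1 => by
    rw [hA, hB]
    exact max_le_max (by linarith [lindley_mono hA hB h0 n]) le_rfl

lemma lindley_eq_add_sum_of_lt (hA : ∀ n, A (n + 1) = max (A n + x n) 0)
    (hB : ∀ n, B (n + 1) = max (B n + x n) 0) (h0 : B 0 ≤ A 0) :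
    ∀ n, B n < A n → A n = A 0 + ∑ k ∈ range n, x k
  | 0, _ => by simp
  | n + 1, hlt => by
    have hB_nonneg : 0 ≤ B (n + 1) := hB n ▸ le_max_right _ _
    have hpos : 0 < A n + x n := by
      by_contra! hle
      rw [hA, max_eq_right hle] at hlt
      linarith
    have hstep : A (n + 1) = A n + x n := by rw [hA, max_eq_left hpos.le]
    have hlt_n : B n < A n := by
      refine (lindley_mono hA hB h0 n).lt_of_ne fun heq => hlt.ne ?_
      rw [hA, hB, heq]
    rw [hstep, lindley_eq_add_sum_of_lt hA hB h0 n hlt_n, sum_range_succ, add_assoc]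

lemma lindley_eq_of_sum_lt (hA : ∀ n, A (n + 1) = max (A n + x n) 0)
    (hB : ∀ n, B (n + 1) = max (B n + x n) 0) (hA0 : 0 ≤ A 0) (hB0 : 0 ≤ B 0) {n : ℕ}
    (hsumA : ∑ k ∈ range n, x k < -A 0) (hsumB : ∑ k ∈ range n, x k < -B 0) :
    A n = B n := by
  wlog h0 : B 0 ≤ A 0 generalizing A B
  · exact (this hB hA hB0 hA0 hsumB hsumA (le_of_not_ge h0)).symm
  by_contra hne
  have hlt : B n < A n := (lindley_mono hA hB h0 n).lt_of_ne (Ne.symm hne)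
  have := lindley_eq_add_sum_of_lt hA hB h0 n hlt
  linarith [lindley_nonneg hB hB0 n]

end Lindley

lemma HasDerivAt.exists_mem_Ioo_lt {f : ℝ → ℝ} {f' x ε : ℝ} (hf : HasDerivAt f f' x)
    (hf' : f' < 0) (hε : 0 < ε) : ∃ y ∈ Set.Ioo x (x + ε), f y < f x := by
  have hslope : ∀ᶠ y in 𝓝[>] x, slope f x y < 0 :=
    (hf.hasDerivWithinAt (s := Set.Ioi x)).limsup_slope_le' (lt_irrefl x) hf'
  have hIoo : ∀ᶠ y in 𝓝[>] x, y ∈ Set.Ioo x (x + ε) := Ioo_mem_nhdsGT (by linarith)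
  obtain ⟨y, hy, hy_slope⟩ := (hIoo.and hslope).exists
  refine ⟨y, hy, ?_⟩
  rw [slope_def_field] at hy_slope
  by_contra! hle
  exact hy_slope.not_ge (div_nonneg (by linarith) (by linarith [hy.1]))

section Probability

variable {Ω : Type*} [MeasurableSpace Ω] {μ : Measure Ω}

lemma integrable_exp_mul_of_le_of_forall_nonneg [IsFiniteMeasure μ] {X : Ω → ℝ}
    {η t : ℝ} (hX : Measurable X) (hX0 : ∀ ω, 0 ≤ X ω)
    (hη : Integrable (fun ω => exp (η * X ω)) μ) (ht : t ≤ η) :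
    Integrable (fun ω => exp (t * X ω)) μ := by
  refine (hη.add (integrable_const 1)).mono' (by fun_prop) (ae_of_all _ fun ω => ?_)
  rw [norm_of_nonneg (exp_pos _).le, Pi.add_apply]
  rcases le_total t 0 with ht0 | ht0
  · have : exp (t * X ω) ≤ 1 :=
      exp_le_one_iff.mpr (mul_nonpos_of_nonpos_of_nonneg ht0 (hX0 ω))
    linarith [exp_pos (η * X ω)]
  · have : exp (t * X ω) ≤ exp (η * X ω) := exp_le_exp.mpr (by gcongr; exact hX0 ω)
    linarith

lemma zero_mem_interior_integrableExpSet_of_nonneg [IsFiniteMeasure μ] {X : Ω → ℝ} {η : ℝ}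
    (hX : Measurable X) (hX0 : ∀ ω, 0 ≤ X ω) (hη0 : 0 < η)
    (hη : Integrable (fun ω => exp (η * X ω)) μ) :
    0 ∈ interior (integrableExpSet X μ) := by
  have hIio : (0 : ℝ) ∈ interior (Set.Iio η) := by rwa [interior_Iio]
  exact interior_mono (fun t ht => integrable_exp_mul_of_le_of_forall_nonneg hX hX0 hη ht.le) hIio

lemma exists_mgf_mul_mgf_lt_one [IsProbabilityMeasure μ] {X Y : Ω → ℝ} {η : ℝ}
    (hX : Measurable X) (hY : Measurable Y) (hX0 : ∀ ω, 0 ≤ X ω) (hY0 : ∀ ω, 0 ≤ Y ω)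
    (hη : 0 < η) (hXη : Integrable (fun ω => exp (η * X ω)) μ)
    (hYη : Integrable (fun ω => exp (η * Y ω)) μ) {a b ε : ℝ}
    (hdrift : a * μ[X] + b * μ[Y] < 0) (hε : 0 < ε) :
    ∃ t ∈ Set.Ioo 0 ε, mgf X μ (a * t) * mgf Y μ (b * t) < 1 := by
  have hderiv : HasDerivAt (fun t => mgf X μ (a * t) * mgf Y μ (b * t))
      (a * μ[X] + b * μ[Y]) 0 := by
    have hXd := hasDerivAt_mgf (zero_mem_interior_integrableExpSet_of_nonneg hX hX0 hη hXη)
    have hYd := hasDerivAt_mgf (zero_mem_interior_integrableExpSet_of_nonneg hY hY0 hη hYη)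
    simp only [zero_mul, exp_zero, mul_one] at hXd hYd
    have hXa := hXd.comp_of_eq (0 : ℝ) ((hasDerivAt_id (0 : ℝ)).const_mul a) (by simp)
    have hYb := hYd.comp_of_eq (0 : ℝ) ((hasDerivAt_id (0 : ℝ)).const_mul b) (by simp)
    have := hXa.mul hYb
    simp only [Function.comp_apply, id, mul_zero, mgf_zero, mul_one] at this
    exact this.congr_deriv (by ring)
  simpa using hderiv.exists_mem_Ioo_lt hdrift hε

lemma measureReal_neg_le_le_exp_neg_max [IsProbabilityMeasure μ] {X : Ω → ℝ} {t c : ℝ}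
    (ht : 0 ≤ t) (hpos : 0 < mgf X μ t) (hle : mgf X μ t ≤ exp (-c)) (w : ℝ) :
    μ.real {ω | -w ≤ X ω} ≤ exp (-max (c - t * w) 0) := by
  rcases le_total (c - t * w) 0 with h | h
  · rw [max_eq_right h, neg_zero, exp_zero]
    exact measureReal_le_one
  · rw [max_eq_left h]
    calc μ.real {ω | -w ≤ X ω} ≤ exp (-t * -w) * mgf X μ t :=
          measure_ge_le_exp_mul_mgf (-w) ht (mgf_pos_iff.mp hpos)
      _ ≤ exp (-t * -w) * exp (-c) := by gcongr
      _ = exp (-(c - t * w)) := by rw [← exp_add]; ring_nf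

lemma ProbabilityTheory.iIndepFun.mgf_sum_const_mul {ι : Type*} {Y : ι → Ω → ℝ}
    (hindep : iIndepFun Y μ) (hY : ∀ i, Measurable (Y i)) (c : ι → ℝ) (s : Finset ι)
    (t : ℝ) :
    mgf (fun ω => ∑ i ∈ s, c i * Y i ω) μ t = ∏ i ∈ s, mgf (Y i) μ (c i * t) := by
  have hscaled := (hindep.comp (fun i x => c i * x) fun i => measurable_const_mul (c i))
    |>.mgf_sum (fun i => (hY i).const_mul (c i)) s (t := t)
  simpa only [Function.comp_def, mgf_const_mul, Finset.sum_fn] using hscaled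

lemma mgf_sum_sub_div_eq_pow [IsProbabilityMeasure μ] {U V : ℕ → Ω → ℝ}
    (hU : ∀ n, Measurable (U n)) (hV : ∀ n, Measurable (V n))
    (hindep : iIndepFun (fun i : ℕ ⊕ ℕ => Sum.elim U V i) μ)
    (hUid : ∀ n, IdentDistrib (U n) (U 0) μ μ) (hVid : ∀ n, IdentDistrib (V n) (V 0) μ μ)
    (lam mu t : ℝ) (n : ℕ) :
    mgf (fun ω => ∑ k ∈ range n, (V k ω / mu - U k ω / lam)) μ t =
      (mgf (U 0) μ (-lam⁻¹ * t) * mgf (V 0) μ (mu⁻¹ * t)) ^ n := by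
  have hsum : (fun ω => ∑ k ∈ range n, (V k ω / mu - U k ω / lam)) = fun ω =>
      ∑ i ∈ (range n).disjSum (range n),
        Sum.elim (fun _ => -lam⁻¹) (fun _ => mu⁻¹) i * Sum.elim U V i ω := by
    ext ω
    simp only [sum_disjSum, Sum.elim_inl, Sum.elim_inr, ← sum_add_distrib]
    exact sum_congr rfl fun k _ => by ring
  rw [hsum, hindep.mgf_sum_const_mul (fun i => i.rec hU hV), prod_disjSum]
  simp only [Sum.elim_inl, Sum.elim_inr]
  rw [prod_congr rfl fun k _ => mgf_congr_of_identDistrib _ _ (hUid k) _,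
    prod_congr rfl fun k _ => mgf_congr_of_identDistrib _ _ (hVid k) _,
    prod_const, prod_const, card_range, mul_pow]

lemma integral_rpow_abs_lindley_sub_le [IsProbabilityMeasure μ] {x A B : ℕ → Ω → ℝ}
    (hx : ∀ k, Measurable (x k))
    (hA : ∀ n ω, A (n + 1) ω = max (A n ω + x n ω) 0)
    (hB : ∀ n ω, B (n + 1) ω = max (B n ω + x n ω) 0) {a b : ℝ} (ha : 0 ≤ a) (hb : 0 ≤ b)
    (hA0 : ∀ ω, A 0 ω = a) (hB0 : ∀ ω, B 0 ω = b) {α : ℝ} (hα : 0 < α) (n : ℕ) :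
    ∫ ω, |A n ω - B n ω| ^ α ∂μ ≤
      (μ.real {ω | -a ≤ ∑ k ∈ range n, x k ω} + μ.real {ω | -b ≤ ∑ k ∈ range n, x k ω}) *
        |a - b| ^ α := by
  set Ea := {ω | -a ≤ ∑ k ∈ range n, x k ω}
  set Eb := {ω | -b ≤ ∑ k ∈ range n, x k ω}
  have hS : Measurable fun ω => ∑ k ∈ range n, x k ω := by fun_prop
  have hEa : MeasurableSet Ea := measurableSet_le measurable_const hS
  have hEb : MeasurableSet Eb := measurableSet_le measurable_const hS
  have hbound : ∀ ω, |A n ω - B n ω| ^ α ≤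
      (Ea.indicator 1 ω + Eb.indicator 1 ω) * |a - b| ^ α := by
    intro ω
    by_cases hω : ω ∈ Ea ∨ ω ∈ Eb
    · have hind : 1 ≤ Ea.indicator (1 : Ω → ℝ) ω + Eb.indicator 1 ω := by
        simp only [Set.indicator_apply, Pi.one_apply]
        split_ifs <;> simp_all
      have hcontract : |A n ω - B n ω| ≤ |a - b| := by
        simpa [hA0, hB0] using
          abs_lindley_sub_le (A := (A · ω)) (B := (B · ω)) (hA · ω) (hB · ω) n
      calc |A n ω - B n ω| ^ α ≤ |a - b| ^ α :=
            rpow_le_rpow (abs_nonneg _) hcontract hα.le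
        _ ≤ _ := le_mul_of_one_le_left (by positivity) hind
    · push Not at hω
      have heq : A n ω = B n ω := by
        refine lindley_eq_of_sum_lt (A := (A · ω)) (B := (B · ω)) (hA · ω) (hB · ω)
          ?_ ?_ ?_ ?_ <;> simp_all [Ea, Eb]
      rw [heq, sub_self, abs_zero, zero_rpow hα.ne']
      exact mul_nonneg (add_nonneg (Set.indicator_nonneg (fun _ _ => zero_le_one) _)
        (Set.indicator_nonneg (fun _ _ => zero_le_one) _)) (by positivity)
  calc ∫ ω, |A n ω - B n ω| ^ α ∂μ
      ≤ ∫ ω, (Ea.indicator 1 ω + Eb.indicator 1 ω) * |a - b| ^ α ∂μ :=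
        integral_mono_of_nonneg (ae_of_all _ fun ω => by positivity)
          (((integrable_const 1).indicator hEa).add ((integrable_const 1).indicator hEb)
            |>.mul_const _) (ae_of_all _ hbound)
    _ = (μ.real Ea + μ.real Eb) * |a - b| ^ α := by
        rw [integral_mul_const, integral_add ((integrable_const 1).indicator hEa)
          ((integrable_const 1).indicator hEb), integral_indicator_one hEa,
          integral_indicator_one hEb]

end Probability

/-- Lipschitz continuity (with exponential forgetting of the initial
condition) of synchronously coupled GI/GI/1 waiting-time processes. -/
theorem stmt3
    {Ω : Type*} [MeasureSpace Ω] [IsProbabilityMeasure (ℙ : Measure Ω)]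
    (U V : ℕ → Ω → ℝ)
    (hUmeas : ∀ n, Measurable (U n)) (hVmeas : ∀ n, Measurable (V n))
    (hindep : iIndepFun
      (fun i : ℕ ⊕ ℕ => Sum.elim U V i) ℙ)
    (hUnonneg : ∀ n ω, 0 ≤ U n ω) (hVnonneg : ∀ n ω, 0 ≤ V n ω)
    (hUid : ∀ n, IdentDistrib (U n) (U 0) ℙ ℙ)
    (hVid : ∀ n, IdentDistrib (V n) (V 0) ℙ ℙ)
    (hUmean : ∫ ω, U 0 ω ∂ℙ = 1) (hVmean : ∫ ω, V 0 ω ∂ℙ = 1)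
    (η : ℝ) (hη : 0 < η)
    (hUexp : Integrable (fun ω => Real.exp (η * U 0 ω)) ℙ)
    (hVexp : Integrable (fun ω => Real.exp (η * V 0 ω)) ℙ)
    (lam mu : ℝ) (hlam : 0 < lam) (hlammu : lam < mu) :
    ∃ γ > (0 : ℝ), ∃ θ > (0 : ℝ),
      ∀ w1 w2 : ℝ, 0 ≤ w1 → 0 ≤ w2 →
      ∀ W1 W2 : ℕ → Ω → ℝ,
        (∀ ω, W1 0 ω = w1) → (∀ ω, W2 0 ω = w2) →
        (∀ n ω, W1 (n + 1) ω = max (W1 n ω + V n ω / mu - U n ω / lam) 0) →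
        (∀ n ω, W2 (n + 1) ω = max (W2 n ω + V n ω / mu - U n ω / lam) 0) →
        ∀ α : ℝ, 1 ≤ α → ∀ n : ℕ,
          (∫ ω, |W1 n ω - W2 n ω| ^ α ∂ℙ) ≤
            (Real.exp (-max (γ * n - mu * θ * w1) 0) +
              Real.exp (-max (γ * n - mu * θ * w2) 0)) * |w1 - w2| ^ α := by
  have hmu : 0 < mu := hlam.trans hlammu
  have hdrift : -lam⁻¹ * ℙ[U 0] + mu⁻¹ * ℙ[V 0] < 0 := by
    rw [hUmean, hVmean]
    linarith [inv_strictAnti₀ hlam hlammu]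
  obtain ⟨t, ⟨ht, htη⟩, hlt⟩ := exists_mgf_mul_mgf_lt_one (hUmeas 0) (hVmeas 0) (hUnonneg 0)
    (hVnonneg 0) hη hUexp hVexp hdrift (mul_pos hη hmu)
  set r := mgf (U 0) ℙ (-lam⁻¹ * t) * mgf (V 0) ℙ (mu⁻¹ * t)
  have hr : 0 < r := by
    refine mul_pos (mgf_pos (integrable_exp_mul_of_le_of_forall_nonneg (hUmeas 0)
      (hUnonneg 0) hUexp ?_)) (mgf_pos (integrable_exp_mul_of_le_of_forall_nonneg
      (hVmeas 0) (hVnonneg 0) hVexp ?_))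
    · have : 0 ≤ lam⁻¹ * t := by positivity
      linarith
    · rw [inv_mul_le_iff₀ hmu, mul_comm]
      exact htη.le
  refine ⟨-log r, neg_pos.mpr (log_neg hr hlt), t / mu, div_pos ht hmu, ?_⟩
  intro w1 w2 hw1 hw2 W1 W2 h10 h20 h1 h2 α hα n
  have hmgf := mgf_sum_sub_div_eq_pow hUmeas hVmeas hindep hUid hVid lam mu t n
  have hpow : exp (-(-log r * n)) = r ^ n := by
    rw [neg_mul, neg_neg, mul_comm, exp_nat_mul, exp_log hr]
  have hchernoff :=
    measureReal_neg_le_le_exp_neg_max ht.le (hmgf ▸ pow_pos hr n) (hmgf ▸ hpow.ge)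
  rw [mul_div_cancel₀ t hmu.ne']
  calc ∫ ω, |W1 n ω - W2 n ω| ^ α ∂ℙ
      ≤ _ := integral_rpow_abs_lindley_sub_le
        (x := fun k ω => V k ω / mu - U k ω / lam) (fun k => by fun_prop)
        (fun n ω => by rw [h1, add_sub_assoc]) (fun n ω => by rw [h2, add_sub_assoc])
        hw1 hw2 h10 h20 (by linarith) n
    _ ≤ _ := by gcongr <;> exact hchernoff _
end

section
/- For every t >= 0, w_t <= w'_t and y_t <= (lambda_u / lambda_l) * y'_t. -/
section Lindley

variable {a a' b b' W W' Y Y' : ℕ → ℝ}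

theorem lindley_mono_s7 (h0 : W 0 ≤ W' 0) (ha : ∀ t, a t ≤ a' t)
    (hW : ∀ t, W (t + 1) = max (W t + a t) 0) (hW' : ∀ t, W' (t + 1) = max (W' t + a' t) 0) :
    ∀ t, W t ≤ W' t
  | 0 => h0
  | t + 1 => by
    rw [hW, hW']
    exact max_le_max_right 0 (add_le_add (lindley_mono_s7 h0 ha hW hW' t) (ha t))

theorem busy_nonneg (h0 : 0 ≤ Y' 0) (hb' : ∀ t, 0 ≤ b' t)
    (hY' : ∀ t, Y' (t + 1) = if 0 < W' (t + 1) then Y' t + b' t else 0) :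
    ∀ t, 0 ≤ Y' t
  | 0 => h0
  | t + 1 => by
    rw [hY']
    split_ifs
    · exact add_nonneg (busy_nonneg h0 hb' hY' t) (hb' t)
    · exact le_rfl

/-- A busy period ends whenever the dominating one does, since `W ≤ W'`; while it lasts, it
grows by at most `c` times the increments of the dominating one. -/
theorem busy_le_mul {c : ℝ} (hc : 0 ≤ c) (hWW' : ∀ t, W t ≤ W' t)
    (hb : ∀ t, b t ≤ c * b' t) (hb' : ∀ t, 0 ≤ b' t)
    (hY'0 : 0 ≤ Y' 0) (h0 : Y 0 ≤ c * Y' 0)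
    (hY : ∀ t, Y (t + 1) = if 0 < W (t + 1) then Y t + b t else 0)
    (hY' : ∀ t, Y' (t + 1) = if 0 < W' (t + 1) then Y' t + b' t else 0) :
    ∀ t, Y t ≤ c * Y' t
  | 0 => h0
  | t + 1 => by
    have ih := busy_le_mul hc hWW' hb hb' hY'0 h0 hY hY' t
    rw [hY]
    split_ifs with hpos
    · rw [hY', if_pos (hpos.trans_le (hWW' (t + 1))), mul_add]
      exact add_le_add ih (hb t)
    · exact mul_nonneg hc (busy_nonneg hY'0 hb' hY' (t + 1))

end Lindley

theorem stmt7_general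
    (lam_l lam_u mu_l mu_u : ℝ)
    (hlam_l : 0 < lam_l) (hlam : lam_l ≤ lam_u)
    (hmu_l : 0 < mu_l)
    (u v : ℕ → ℝ) (hu : ∀ t, 0 ≤ u t) (hv : ∀ t, 0 ≤ v t)
    (lamSeq muSeq : ℕ → ℝ)
    (hlamSeq : ∀ t, lamSeq t ∈ Set.Icc lam_l lam_u)
    (hmuSeq : ∀ t, muSeq t ∈ Set.Icc mu_l mu_u)
    (w y : ℝ) (hy : 0 ≤ y)
    (W Y W' Y' : ℕ → ℝ)
    (hW0 : W 0 = w) (hY0 : Y 0 = y) (hW'0 : W' 0 = w) (hY'0 : Y' 0 = y)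
    (hWrec : ∀ t, W (t + 1) = max (W t + v t / muSeq t - u t / lamSeq t) 0)
    (hYrec : ∀ t, Y (t + 1) =
      if 0 < W (t + 1) then Y t + u t / lamSeq t else 0)
    (hW'rec : ∀ t, W' (t + 1) = max (W' t + v t / mu_l - u t / lam_u) 0)
    (hY'rec : ∀ t, Y' (t + 1) =
      if 0 < W' (t + 1) then Y' t + u t / lam_u else 0) :
    ∀ t : ℕ, W t ≤ W' t ∧ Y t ≤ (lam_u / lam_l) * Y' t := by
  have hlam_u : 0 < lam_u := hlam_l.trans_le hlam
  have hc : 1 ≤ lam_u / lam_l := (one_le_div hlam_l).2 hlam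
  have hdrift : ∀ t, v t / muSeq t - u t / lamSeq t ≤ v t / mu_l - u t / lam_u := fun t =>
    sub_le_sub (div_le_div_of_nonneg_left (hv t) hmu_l (hmuSeq t).1)
      (div_le_div_of_nonneg_left (hu t) (hlam_l.trans_le (hlamSeq t).1) (hlamSeq t).2)
  have hWW' : ∀ t, W t ≤ W' t :=
    lindley_mono_s7 (hW0.trans hW'0.symm).le hdrift (fun t => by rw [hWrec, add_sub_assoc])
      (fun t => by rw [hW'rec, add_sub_assoc])
  have hincr : ∀ t, u t / lamSeq t ≤ lam_u / lam_l * (u t / lam_u) := fun t => by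
    rw [div_mul_div_comm, mul_comm lam_u, mul_div_mul_right _ _ hlam_u.ne']
    exact div_le_div_of_nonneg_left (hu t) hlam_l (hlamSeq t).1
  have hYY' : ∀ t, Y t ≤ lam_u / lam_l * Y' t :=
    busy_le_mul (zero_le_one.trans hc) hWW' hincr (fun t => div_nonneg (hu t) hlam_u.le)
      (hY'0 ▸ hy) (by rw [hY0, hY'0]; exact le_mul_of_one_le_left hy hc) hYrec hY'rec
  exact fun t => ⟨hWW' t, hYY' t⟩

/-- pathwise domination of the GI/GI/1 waiting-time and observed
busy period sequences by the comparison sequences driven by the worst-case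
parameters `(lam_u, mu_l)`. -/
theorem stmt7
    (lam_l lam_u mu_l mu_u : ℝ)
    (hlam_l : 0 < lam_l) (hlam : lam_l ≤ lam_u)
    (hmu_l : 0 < mu_l) (hmu : mu_l ≤ mu_u)
    (u v : ℕ → ℝ) (hu : ∀ t, 0 ≤ u t) (hv : ∀ t, 0 ≤ v t)
    (lamSeq muSeq : ℕ → ℝ)
    (hlamSeq : ∀ t, lamSeq t ∈ Set.Icc lam_l lam_u)
    (hmuSeq : ∀ t, muSeq t ∈ Set.Icc mu_l mu_u)
    (w y : ℝ) (hw : 0 ≤ w) (hy : 0 ≤ y)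
    (W Y W' Y' : ℕ → ℝ)
    (hW0 : W 0 = w) (hY0 : Y 0 = y) (hW'0 : W' 0 = w) (hY'0 : Y' 0 = y)
    (hWrec : ∀ t, W (t + 1) = max (W t + v t / muSeq t - u t / lamSeq t) 0)
    (hYrec : ∀ t, Y (t + 1) =
      if 0 < W (t + 1) then Y t + u t / lamSeq t else 0)
    (hW'rec : ∀ t, W' (t + 1) = max (W' t + v t / mu_l - u t / lam_u) 0)
    (hY'rec : ∀ t, Y' (t + 1) =
      if 0 < W' (t + 1) then Y' t + u t / lam_u else 0) :
    ∀ t : ℕ, W t ≤ W' t ∧ Y t ≤ (lam_u / lam_l) * Y' t :=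
  stmt7_general lam_l lam_u mu_l mu_u hlam_l hlam hmu_l u v hu hv lamSeq muSeq hlamSeq hmuSeq w y hy
    W Y W' Y' hW0 hY0 hW'0 hY'0 hWrec hYrec hW'rec hY'rec
end

section
/- For every t >= 2, sum_{s=1}^{t} eta_s^2 * prod_{tau=s+1}^{t} (1 - a*eta_tau) <= (2/a) * eta_t, where the empty product (for s = t) equals 1. -/
/-!
Write `S_t` for the left-hand side. Peeling off the term `s = t` gives the recursion
`S_{t+1} = (1 - a η_{t+1}) S_t + η_{t+1}²`, and one proves `0 ≤ S_t ≤ (2/a) η_t` by induction.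
When `1 - a η_{t+1} ≥ 0`, the ratio condition `η_t ≤ η_{t+1} (1 + (a/2) η_{t+1})` turns the
upper bound for `S_t` into `S_{t+1} ≤ (2/a) η_{t+1} - a η_{t+1}³`. When the factor is negative,
`S_{t+1} ≤ η_{t+1}² ≤ (2/a) η_{t+1}`. Nonnegativity survives because `S_t ≤ 4/a²` and
`(1 - a y) (4/a²) + y² = (y - 2/a)²`.
-/

open Finset

def discountedSum {R : Type*} [CommSemiring R] (f g : ℕ → R) (t : ℕ) : R :=
  ∑ s ∈ Icc 1 t, f s * ∏ τ ∈ Icc (s + 1) t, g τ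

theorem discountedSum_one {R : Type*} [CommSemiring R] (f g : ℕ → R) :
    discountedSum f g 1 = f 1 := by
  simp [discountedSum]

theorem discountedSum_succ {R : Type*} [CommSemiring R] (f g : ℕ → R) (n : ℕ) :
    discountedSum f g (n + 1) = g (n + 1) * discountedSum f g n + f (n + 1) := by
  unfold discountedSum
  rw [sum_Icc_succ_top (by omega), Icc_eq_empty_of_lt (Nat.lt_succ_self _), prod_empty, mul_one,
    mul_sum]
  congr 1
  refine sum_congr rfl fun s hs => ?_
  rw [prod_Icc_succ_top (by linarith [(mem_Icc.mp hs).2])]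
  ring

section Step

variable {a S x y : ℝ}

theorem one_sub_mul_mul_add_sq_nonneg (ha : 0 < a) (hS : 0 ≤ S) (hS' : S ≤ 4 / a ^ 2) :
    0 ≤ (1 - a * y) * S + y ^ 2 := by
  have hcomb : (1 - a * y) * S + y ^ 2
      = a ^ 2 / 4 * ((4 / a ^ 2 - S) * y ^ 2 + S * (y - 2 / a) ^ 2) := by
    field_simp
    ring
  rw [hcomb]
  have : 0 ≤ 4 / a ^ 2 - S := by linarith
  positivity

theorem one_sub_mul_mul_add_sq_le (ha : 0 < a) (hS : 0 ≤ S) (hSx : S ≤ 2 / a * x)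
    (hy : 0 ≤ y) (hy' : y ≤ 2 / a) (hxy : x ≤ y * (1 + a / 2 * y)) :
    (1 - a * y) * S + y ^ 2 ≤ 2 / a * y := by
  rcases le_or_gt 0 (1 - a * y) with hc | hc
  · calc (1 - a * y) * S + y ^ 2
        ≤ (1 - a * y) * (2 / a * (y * (1 + a / 2 * y))) + y ^ 2 := by
          gcongr
          exact hSx.trans (by gcongr)
      _ = 2 / a * y - a * y ^ 3 := by field_simp; ring
      _ ≤ 2 / a * y := by nlinarith [pow_nonneg hy 3]
  · calc (1 - a * y) * S + y ^ 2 ≤ y * y := by nlinarith [mul_nonpos_of_nonpos_of_nonneg hc.le hS]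
      _ ≤ 2 / a * y := by gcongr

end Step

/-- step-size summation bound
`∑_{s=1}^{t} η_s² ∏_{τ=s+1}^{t} (1 - a η_τ) ≤ (2/a) η_t`. -/
theorem stmt8
    (a : ℝ) (ha : 0 < a)
    (η : ℕ → ℝ)
    (hpos : ∀ t, 1 ≤ t → 0 < η t)
    (hmono : ∀ t, 1 ≤ t → η (t + 1) ≤ η t)
    (h1 : η 1 < 2 / a)
    (hratio : ∀ t, 2 ≤ t → η (t - 1) / η t ≤ 1 + (a / 2) * η t) :
    ∀ t, 2 ≤ t →
      ∑ s ∈ Finset.Icc 1 t,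
          η s ^ 2 * ∏ τ ∈ Finset.Icc (s + 1) t, (1 - a * η τ)
        ≤ (2 / a) * η t := by
  have hle : ∀ t, 1 ≤ t → η t ≤ 2 / a := fun t ht =>
    (antitoneOn_nat_Ici_of_succ_le hmono Set.self_mem_Ici ht ht).trans h1.le
  set S := discountedSum (fun s => η s ^ 2) (fun τ => 1 - a * η τ)
  have hbound : ∀ t, 1 ≤ t → 0 ≤ S t ∧ S t ≤ 2 / a * η t := by
    intro t ht
    induction t, ht using Nat.le_induction with
    | base =>
      simp only [S, discountedSum_one, sq]
      exact ⟨mul_self_nonneg _, mul_le_mul_of_nonneg_right (hle 1 le_rfl) (hpos 1 le_rfl).le⟩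
    | succ n hn ih =>
      have hratio' : η n ≤ η (n + 1) * (1 + a / 2 * η (n + 1)) := by
        have h := hratio (n + 1) (by omega)
        rwa [Nat.add_sub_cancel, div_le_iff₀ (hpos _ (by omega)), mul_comm] at h
      have hS4 : S n ≤ 4 / a ^ 2 :=
        calc S n ≤ 2 / a * η n := ih.2
          _ ≤ 2 / a * (2 / a) := by gcongr; exact hle n hn
          _ = 4 / a ^ 2 := by ring
      rw [show S (n + 1) = _ from discountedSum_succ _ _ n]
      exact ⟨one_sub_mul_mul_add_sq_nonneg ha ih.1 hS4,
        one_sub_mul_mul_add_sq_le ha ih.1 ih.2 (hpos _ (by omega)).le (hle _ (by omega)) hratio'⟩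
  exact fun t ht => (hbound t (by omega)).2
end

section
/- For every t >= 1, Delta_{t+1} <= (1 - 2*eta_t*K_0) * Delta_t + sigma_bar^2 * eta_t^2 - 2*eta_t * E< theta_t - theta_star, h_t - g(theta_t) >, where Delta_t := E|| theta_t - theta_star ||^2. -/
open MeasureTheory Set
open scoped RealInnerProductSpace

/-!
Projecting onto a convex set moves a point closer to every point of the set (the variational
inequality `⟪z - Π z, u - Π z⟫ ≤ 0`), so `‖θ_{t+1} - θ*‖ ≤ ‖θ_t - η_t h_t - θ*‖`. Expanding the
square and splitting `h_t = g(θ_t) + (h_t - g(θ_t))`, strong monotonicity of `g` gives the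
inequality pointwise in `ω`; it is then integrated. Every term is integrable because `Θ` is
bounded and `h_t` is square integrable.
-/

section

variable {E : Type*} [NormedAddCommGroup E] [InnerProductSpace ℝ E]

theorem norm_sub_le_of_isNearest {K : Set E} (hK : Convex ℝ K) {z p u : E} (hp : p ∈ K)
    (hmin : ∀ v ∈ K, ‖z - p‖ ≤ ‖z - v‖) (hu : u ∈ K) : ‖p - u‖ ≤ ‖z - u‖ := by
  have : Nonempty K := ⟨⟨p, hp⟩⟩
  have hbdd : BddBelow (range fun v : K => ‖z - v‖) :=
    ⟨0, forall_mem_range.2 fun _ => norm_nonneg _⟩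
  have hinf : ‖z - p‖ = ⨅ v : K, ‖z - v‖ :=
    le_antisymm (le_ciInf fun v => hmin v v.2) (ciInf_le hbdd ⟨p, hp⟩)
  have hvar : ⟪z - p, u - p⟫ ≤ 0 := (norm_eq_iInf_iff_real_inner_le_zero hK hp).1 hinf u hu
  have hsplit : ‖z - u‖ ^ 2 = ‖z - p‖ ^ 2 - 2 * ⟪z - p, u - p⟫ + ‖p - u‖ ^ 2 := by
    rw [← norm_sub_rev u p, ← norm_sub_sq_real, sub_sub_sub_cancel_right]
  refine (pow_le_pow_iff_left₀ (norm_nonneg _) (norm_nonneg _) two_ne_zero).1 ?_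
  linarith [sq_nonneg ‖z - p‖]

theorem sq_norm_sub_le_of_step {x y v w u : E} {η κ : ℝ} (hη : 0 ≤ η)
    (hy : ‖y - u‖ ≤ ‖x - η • v - u‖) (hw : κ * ‖x - u‖ ^ 2 ≤ ⟪x - u, w⟫) :
    ‖y - u‖ ^ 2 ≤
      (1 - 2 * η * κ) * ‖x - u‖ ^ 2 + η ^ 2 * ‖v‖ ^ 2 - 2 * η * ⟪x - u, v - w⟫ := by
  have hexpand : ‖x - η • v - u‖ ^ 2 = ‖x - u‖ ^ 2 - 2 * η * ⟪x - u, v⟫ + η ^ 2 * ‖v‖ ^ 2 := by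
    rw [sub_right_comm, norm_sub_sq_real, real_inner_smul_right, norm_smul, mul_pow,
      Real.norm_eq_abs, sq_abs, mul_assoc]
  have hdrift := mul_le_mul_of_nonneg_left hw (by positivity : 0 ≤ 2 * η)
  have hsq := pow_le_pow_left₀ (norm_nonneg _) hy 2
  rw [inner_sub_right]
  linarith

theorem MeasureTheory.Integrable.inner_of_norm_le {Ω : Type*} {m0 : MeasurableSpace Ω}
    {μ : Measure Ω} {X Y : Ω → E} {C : ℝ} (hX : AEStronglyMeasurable X μ)
    (hXC : ∀ᵐ ω ∂μ, ‖X ω‖ ≤ C) (hY : Integrable Y μ) :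
    Integrable (fun ω => ⟪X ω, Y ω⟫) μ := by
  refine (hY.norm.const_mul C).mono' (hX.inner hY.1) ?_
  filter_upwards [hXC] with ω hω
  exact (norm_inner_le_norm _ _).trans (mul_le_mul_of_nonneg_right hω (norm_nonneg _))

theorem MeasureTheory.integral_sq_norm_sub_le_of_step {Ω : Type*} {m0 : MeasurableSpace Ω}
    {μ : Measure Ω} {X Y V G : Ω → E} {u : E} {η κ : ℝ} (hη : 0 ≤ η)
    (hy : ∀ᵐ ω ∂μ, ‖Y ω - u‖ ≤ ‖X ω - η • V ω - u‖)
    (hw : ∀ᵐ ω ∂μ, κ * ‖X ω - u‖ ^ 2 ≤ ⟪X ω - u, G ω⟫)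
    (hY : Integrable (fun ω => ‖Y ω - u‖ ^ 2) μ) (hX : Integrable (fun ω => ‖X ω - u‖ ^ 2) μ)
    (hV : Integrable (fun ω => ‖V ω‖ ^ 2) μ)
    (hXVG : Integrable (fun ω => ⟪X ω - u, V ω - G ω⟫) μ) :
    ∫ ω, ‖Y ω - u‖ ^ 2 ∂μ ≤ (1 - 2 * η * κ) * (∫ ω, ‖X ω - u‖ ^ 2 ∂μ)
      + η ^ 2 * (∫ ω, ‖V ω‖ ^ 2 ∂μ) - 2 * η * ∫ ω, ⟪X ω - u, V ω - G ω⟫ ∂μ := by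
  have hXV : Integrable (fun ω => (1 - 2 * η * κ) * ‖X ω - u‖ ^ 2 + η ^ 2 * ‖V ω‖ ^ 2) μ :=
    (hX.const_mul _).add (hV.const_mul _)
  calc ∫ ω, ‖Y ω - u‖ ^ 2 ∂μ
      ≤ ∫ ω, ((1 - 2 * η * κ) * ‖X ω - u‖ ^ 2 + η ^ 2 * ‖V ω‖ ^ 2
          - 2 * η * ⟪X ω - u, V ω - G ω⟫) ∂μ := by
        refine integral_mono_ae hY (hXV.sub (hXVG.const_mul _)) ?_
        filter_upwards [hy, hw] with ω hyω hwω
        exact sq_norm_sub_le_of_step hη hyω hwω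
    _ = _ := by
        rw [integral_sub hXV (hXVG.const_mul _), integral_add (hX.const_mul _) (hV.const_mul _),
          integral_const_mul, integral_const_mul, integral_const_mul]

end

theorem stmt9_general
    {Ω : Type*} {m0 : MeasurableSpace Ω} (μ : Measure Ω) [IsProbabilityMeasure μ]
    {d : ℕ}
    (Θ : Set (EuclideanSpace ℝ (Fin d)))
    (hΘconv : Convex ℝ Θ)
    (CΘ : ℝ) (hΘsub : Θ ⊆ Metric.closedBall 0 CΘ)
    -- the metric projection onto Θ
    (proj : EuclideanSpace ℝ (Fin d) → EuclideanSpace ℝ (Fin d))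
    (hproj : ∀ z, proj z ∈ Θ ∧ ∀ u ∈ Θ, ‖z - proj z‖ ≤ ‖z - u‖)
    (θstar : EuclideanSpace ℝ (Fin d)) (hθstar : θstar ∈ Θ)
    (g : EuclideanSpace ℝ (Fin d) → EuclideanSpace ℝ (Fin d))
    (hgmeas : Measurable g)
    (K0 K1 : ℝ) (hK1 : 0 < K1)
    (hmono : ∀ θ ∈ Θ, K0 * ‖θ - θstar‖ ^ 2 ≤ ⟪θ - θstar, g θ⟫)
    (hgrowth : ∀ θ ∈ Θ, ‖g θ‖ ≤ K1 * ‖θ - θstar‖)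
    (σb : ℝ)
    (h : ℕ → Ω → EuclideanSpace ℝ (Fin d))
    (hhmeas : ∀ t, Measurable (h t))
    (hhint : ∀ t, 1 ≤ t → Integrable (fun ω => ‖h t ω‖ ^ 2) μ)
    (hhmom : ∀ t, 1 ≤ t → (∫ ω, ‖h t ω‖ ^ 2 ∂μ) ≤ σb ^ 2)
    (η : ℕ → ℝ) (hη : ∀ t, 1 ≤ t → 0 < η t)
    (θ : ℕ → Ω → EuclideanSpace ℝ (Fin d))
    (hθmeas : ∀ t, Measurable (θ t))
    (hθ1 : ∀ ω, θ 1 ω ∈ Θ)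
    (hrec : ∀ t, 1 ≤ t → ∀ ω, θ (t + 1) ω = proj (θ t ω - η t • h t ω)) :
    ∀ t, 1 ≤ t →
      (∫ ω, ‖θ (t + 1) ω - θstar‖ ^ 2 ∂μ) ≤
        (1 - 2 * η t * K0) * (∫ ω, ‖θ t ω - θstar‖ ^ 2 ∂μ)
          + σb ^ 2 * η t ^ 2
          - 2 * η t * ∫ ω, (⟪θ t ω - θstar, h t ω - g (θ t ω)⟫ : ℝ) ∂μ := by
  intro t ht
  have hmem : ∀ s, 1 ≤ s → ∀ ω, θ s ω ∈ Θ := by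
    intro s hs ω
    induction s, hs using Nat.le_induction with
    | base => exact hθ1 ω
    | succ s hs _ => rw [hrec s hs ω]; exact (hproj _).1
  have hdist : ∀ x ∈ Θ, ‖x - θstar‖ ≤ 2 * CΘ := fun x hx => by
    have hx' := mem_closedBall_zero_iff.1 (hΘsub hx)
    have hθstar' := mem_closedBall_zero_iff.1 (hΘsub hθstar)
    linarith [norm_sub_le x θstar]
  have hdist_int : ∀ s, 1 ≤ s → Integrable (fun ω => ‖θ s ω - θstar‖ ^ 2) μ := fun s hs =>
    .of_bound (by fun_prop) ((2 * CΘ) ^ 2) <| ae_of_all _ fun ω => by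
      rw [norm_pow, norm_norm]
      exact pow_le_pow_left₀ (norm_nonneg _) (hdist _ (hmem s hs ω)) 2
  have hh_int : Integrable (h t) μ :=
    ((memLp_two_iff_integrable_sq_norm (hhmeas t).aestronglyMeasurable).2 (hhint t ht)).integrable
      one_le_two
  have hg_int : Integrable (fun ω => g (θ t ω)) μ :=
    .of_bound (hgmeas.comp (hθmeas t)).aestronglyMeasurable (K1 * (2 * CΘ)) <| ae_of_all _ fun ω =>
      (hgrowth _ (hmem t ht ω)).trans (mul_le_mul_of_nonneg_left (hdist _ (hmem t ht ω)) hK1.le)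
  have hcross_int : Integrable (fun ω => ⟪θ t ω - θstar, h t ω - g (θ t ω)⟫) μ :=
    Integrable.inner_of_norm_le (by fun_prop) (ae_of_all _ fun ω => hdist _ (hmem t ht ω))
      (hh_int.sub hg_int)
  refine (integral_sq_norm_sub_le_of_step (hη t ht).le (ae_of_all _ fun ω => ?_)
    (ae_of_all _ fun ω => hmono _ (hmem t ht ω)) (hdist_int _ (by omega)) (hdist_int t ht)
    (hhint t ht) hcross_int).trans ?_
  · rw [hrec t ht ω]
    exact norm_sub_le_of_isNearest hΘconv (hproj _).1 (hproj _).2 hθstar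
  · linarith [mul_le_mul_of_nonneg_left (hhmom t ht) (sq_nonneg (η t))]

/-- one-step progress inequality for projected stochastic
approximation. -/
theorem stmt9
    {Ω : Type*} {m0 : MeasurableSpace Ω} (μ : Measure Ω) [IsProbabilityMeasure μ]
    {d : ℕ}
    (Θ : Set (EuclideanSpace ℝ (Fin d)))
    (hΘne : Θ.Nonempty) (hΘclosed : IsClosed Θ) (hΘconv : Convex ℝ Θ)
    (CΘ : ℝ) (hΘsub : Θ ⊆ Metric.closedBall 0 CΘ)
    -- the metric projection onto Θ
    (proj : EuclideanSpace ℝ (Fin d) → EuclideanSpace ℝ (Fin d))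
    (hproj : ∀ z, proj z ∈ Θ ∧ ∀ u ∈ Θ, ‖z - proj z‖ ≤ ‖z - u‖)
    (θstar : EuclideanSpace ℝ (Fin d)) (hθstar : θstar ∈ Θ)
    (g : EuclideanSpace ℝ (Fin d) → EuclideanSpace ℝ (Fin d))
    (hgmeas : Measurable g)
    (K0 K1 : ℝ) (hK0 : 0 < K0) (hK1 : 0 < K1)
    (hmono : ∀ θ ∈ Θ, K0 * ‖θ - θstar‖ ^ 2 ≤ ⟪θ - θstar, g θ⟫)
    (hgrowth : ∀ θ ∈ Θ, ‖g θ‖ ≤ K1 * ‖θ - θstar‖)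
    (σb : ℝ)
    (h : ℕ → Ω → EuclideanSpace ℝ (Fin d))
    (hhmeas : ∀ t, Measurable (h t))
    (hhint : ∀ t, 1 ≤ t → Integrable (fun ω => ‖h t ω‖ ^ 2) μ)
    (hhmom : ∀ t, 1 ≤ t → (∫ ω, ‖h t ω‖ ^ 2 ∂μ) ≤ σb ^ 2)
    (η : ℕ → ℝ) (hη : ∀ t, 1 ≤ t → 0 < η t)
    (θ : ℕ → Ω → EuclideanSpace ℝ (Fin d))
    (hθmeas : ∀ t, Measurable (θ t))
    (hθ1 : ∀ ω, θ 1 ω ∈ Θ)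
    (hrec : ∀ t, 1 ≤ t → ∀ ω, θ (t + 1) ω = proj (θ t ω - η t • h t ω)) :
    ∀ t, 1 ≤ t →
      (∫ ω, ‖θ (t + 1) ω - θstar‖ ^ 2 ∂μ) ≤
        (1 - 2 * η t * K0) * (∫ ω, ‖θ t ω - θstar‖ ^ 2 ∂μ)
          + σb ^ 2 * η t ^ 2
          - 2 * η t * ∫ ω, (⟪θ t ω - θstar, h t ω - g (θ t ω)⟫ : ℝ) ∂μ :=
  stmt9_general (m0 := m0) μ Θ hΘconv CΘ hΘsub proj hproj θstar hθstar g hgmeas K0 K1 hK1 hmono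
    hgrowth σb h hhmeas hhint hhmom η hη θ hθmeas hθ1 hrec
end

section
/- Then (i) sup_{t>=1} Delta_t < infinity, and (ii) there exists a constant C < infinity, depending only on (K_0, kappa, varkappa, Ctilde_3, Delta_1, sup_t Delta_t), such that for every t >= 1, Delta_{t+1} <= ( prod_{s=2}^{t} (1 - K_0*eta_s) ) * Delta_1 + C * eta_t. -/
/-!
Slow variation of the step sizes, `1/η_{t+1} - 1/η_t ≤ ϰ ≤ K₀/2`, lets a weight `η_s` be carried
forward to time `t` while each contraction factor `1 - 2K₀η_r` is traded for `1 - K₀η_r`: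
`η_s ∏_{r=s+1}^t (1 - 2K₀η_r) ≤ η_t ∏_{r=s+1}^t (1 - K₀η_r)`. The weights
`η_s ∏_{r>s} (1 - K₀η_r)` telescope (multiplied by `K₀` they are differences of consecutive
products), so they sum to at most `1/K₀`. With `η_{s-1} ≤ κη_s` the recursion therefore gives,
whenever `Δ ≤ M` up to time `t`, `Δ_{t+1} ≤ ∏_{s=2}^t (1 - K₀η_s) C̃₀ + (cM + C̃₃) η_t`. As
`η_t → 0`, eventually `cη_t ≤ 1/2`, and induction yields a uniform bound on `Δ`. Finally
`∏_{s=2}^t (1 - K₀η_s) ≤ η_t/η_1`, so replacing `C̃₀` by `Δ_1` in the first term costs `O(η_t)`.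
-/

open Finset Filter Topology

section StepSize

variable {a b v K : ℝ}

theorem mul_one_sub_mul_le_of_inv_sub_inv_le (ha : 0 < a) (hb : 0 < b) (h : 1 / b - 1 / a ≤ v) :
    a * (1 - v * b) ≤ b := by
  have key : a - b = a * b * (1 / b - 1 / a) := by field_simp
  nlinarith [mul_le_mul_of_nonneg_left h (mul_pos ha hb).le]

theorem mul_one_sub_mul_le_of_le (ha : 0 ≤ a) (hb : 0 ≤ b) (hvK : v ≤ K)
    (h : a * (1 - v * b) ≤ b) : a * (1 - K * b) ≤ b := by
  nlinarith [mul_nonneg (mul_nonneg ha hb) (sub_nonneg.mpr hvK)]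

theorem mul_one_sub_two_mul_le (hb : 0 ≤ b) (hba : b ≤ a) (hv : 0 ≤ v) (hvK : v ≤ K)
    (h : a * (1 - v * b) ≤ b) : a * (1 - 2 * b * K) ≤ b * (1 - K * b) := by
  nlinarith [mul_nonneg (mul_nonneg (sub_nonneg.mpr hba) hb) (by linarith : 0 ≤ 2 * K - v),
    mul_nonneg (mul_nonneg hb hb) (sub_nonneg.mpr hvK)]

end StepSize

theorem mul_prod_Icc_le_mul_prod_Icc {a f g : ℕ → ℝ} {s t : ℕ} (hst : s ≤ t)
    (hf : ∀ r, s < r → 0 ≤ f r) (hg : ∀ r, s < r → 0 ≤ g r)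
    (hstep : ∀ r, s ≤ r → a r * f (r + 1) ≤ a (r + 1) * g (r + 1)) :
    a s * ∏ r ∈ Icc (s + 1) t, f r ≤ a t * ∏ r ∈ Icc (s + 1) t, g r := by
  induction t, hst using Nat.le_induction with
  | base => simp
  | succ t hst ih =>
    have hG : 0 ≤ ∏ r ∈ Icc (s + 1) t, g r :=
      prod_nonneg fun r hr => hg r (by simp at hr; omega)
    rw [prod_Icc_succ_top (by omega), prod_Icc_succ_top (by omega)]
    calc a s * ((∏ r ∈ Icc (s + 1) t, f r) * f (t + 1))
        = (a s * ∏ r ∈ Icc (s + 1) t, f r) * f (t + 1) := by ring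
      _ ≤ (a t * ∏ r ∈ Icc (s + 1) t, g r) * f (t + 1) :=
        mul_le_mul_of_nonneg_right ih (hf _ (by omega))
      _ = (a t * f (t + 1)) * ∏ r ∈ Icc (s + 1) t, g r := by ring
      _ ≤ (a (t + 1) * g (t + 1)) * ∏ r ∈ Icc (s + 1) t, g r :=
        mul_le_mul_of_nonneg_right (hstep t hst) hG
      _ = a (t + 1) * ((∏ r ∈ Icc (s + 1) t, g r) * g (t + 1)) := by ring

theorem mul_sum_mul_prod_Icc_le_one {x : ℕ → ℝ} {K : ℝ} {m : ℕ}
    (hx : ∀ r, m ≤ r → 0 ≤ 1 - K * x r) (t : ℕ) :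
    K * ∑ s ∈ Icc m t, x s * ∏ r ∈ Icc (s + 1) t, (1 - K * x r) ≤ 1 := by
  induction t with
  | zero =>
    rcases Nat.eq_zero_or_pos m with rfl | hm
    · simpa using hx 0 le_rfl
    · simp [Icc_eq_empty_of_lt hm]
  | succ t ih =>
    by_cases hm : m ≤ t + 1
    swap
    · simp [Icc_eq_empty_of_lt (not_le.mp hm)]
    have hsplit : ∀ s ∈ Icc m t, x s * ∏ r ∈ Icc (s + 1) (t + 1), (1 - K * x r)
        = (x s * ∏ r ∈ Icc (s + 1) t, (1 - K * x r)) * (1 - K * x (t + 1)) := fun s hs => by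
      rw [prod_Icc_succ_top (by simp at hs; omega)]; ring
    rw [sum_Icc_succ_top hm, sum_congr rfl hsplit, ← sum_mul,
      Icc_eq_empty_of_lt (Nat.lt_succ_self (t + 1)), prod_empty, mul_one]
    nlinarith [mul_le_mul_of_nonneg_right ih (hx (t + 1) hm)]

theorem prod_Icc_one_le_prod_Icc_two {f g : ℕ → ℝ} (t : ℕ) (hf : ∀ s, 1 ≤ s → 0 ≤ f s)
    (hfg : ∀ s, 2 ≤ s → f s ≤ g s) (hf1 : f 1 ≤ 1) :
    ∏ s ∈ Icc 1 t, f s ≤ ∏ s ∈ Icc 2 t, g s := by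
  rcases Nat.eq_zero_or_pos t with rfl | ht
  · simp
  rw [← insert_Icc_add_one_left_eq_Icc ht, prod_insert (by simp), one_add_one_eq_two]
  have hF : 0 ≤ ∏ s ∈ Icc 2 t, f s := prod_nonneg fun s hs => hf s (by simp at hs; omega)
  have hFG : ∏ s ∈ Icc 2 t, f s ≤ ∏ s ∈ Icc 2 t, g s :=
    prod_le_prod (fun s hs => hf s (by simp at hs; omega)) fun s hs => hfg s (by simp at hs; omega)
  nlinarith

theorem sum_Icc_mul_le_of_weight_bounds {a P Q X : ℕ → ℝ} {κ K L : ℝ} {t : ℕ} (hK : 0 < K)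
    (hκ : 0 ≤ κ) (hL : 0 ≤ L) (hat : 0 ≤ a t) (ha : ∀ s ∈ Icc 2 t, 0 ≤ a s)
    (hP : ∀ s ∈ Icc 2 t, 0 ≤ a s * P s) (hX : ∀ s ∈ Icc 2 t, 0 ≤ X s)
    (hXL : ∀ s ∈ Icc 2 t, X s ≤ L) (haκ : ∀ s ∈ Icc 2 t, a (s - 1) ≤ κ * a s)
    (hPQ : ∀ s ∈ Icc 2 t, a s * P s ≤ a t * Q s) (hQ : K * ∑ s ∈ Icc 2 t, a s * Q s ≤ 1) :
    ∑ s ∈ Icc 2 t, a (s - 1) * a s * P s * X s ≤ κ * L / K * a t := by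
  have hterm : ∀ s ∈ Icc 2 t, a (s - 1) * a s * P s * X s ≤ κ * L * a t * (a s * Q s) := by
    intro s hs
    have hκa := mul_nonneg hκ (ha s hs)
    have hQs : 0 ≤ a t * Q s := (hP s hs).trans (hPQ s hs)
    calc a (s - 1) * a s * P s * X s = a (s - 1) * (a s * P s) * X s := by ring
      _ ≤ κ * a s * (a s * P s) * X s :=
        mul_le_mul_of_nonneg_right (mul_le_mul_of_nonneg_right (haκ s hs) (hP s hs)) (hX s hs)
      _ ≤ κ * a s * (a t * Q s) * X s :=
        mul_le_mul_of_nonneg_right (mul_le_mul_of_nonneg_left (hPQ s hs) hκa) (hX s hs)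
      _ ≤ κ * a s * (a t * Q s) * L :=
        mul_le_mul_of_nonneg_left (hXL s hs) (mul_nonneg hκa hQs)
      _ = κ * L * a t * (a s * Q s) := by ring
  calc ∑ s ∈ Icc 2 t, a (s - 1) * a s * P s * X s
      ≤ ∑ s ∈ Icc 2 t, κ * L * a t * (a s * Q s) := sum_le_sum hterm
    _ = κ * L * a t * (∑ s ∈ Icc 2 t, a s * Q s) := (mul_sum ..).symm
    _ ≤ κ * L * a t * (1 / K) := by
      gcongr
      rwa [le_div_iff₀ hK, mul_comm]
    _ = κ * L / K * a t := by ring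

theorem prod_Icc_two_one_sub_mul_le_div {η : ℕ → ℝ} {K v : ℝ} {t : ℕ} (ht : 1 ≤ t)
    (hpos : ∀ s, 1 ≤ s → 0 < η s) (hvK : v ≤ K) (hg : ∀ s, 1 ≤ s → 0 ≤ 1 - K * η s)
    (hslow : ∀ s, 1 ≤ s → η s * (1 - v * η (s + 1)) ≤ η (s + 1)) :
    ∏ s ∈ Icc 2 t, (1 - K * η s) ≤ η t / η 1 := by
  rw [le_div_iff₀ (hpos 1 le_rfl), mul_comm]
  simpa using mul_prod_Icc_le_mul_prod_Icc (g := fun _ => 1) ht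
    (fun r hr => hg r (by omega)) (fun _ _ => zero_le_one)
    (fun r hr => by
      simpa using mul_one_sub_mul_le_of_le (hpos r (by omega)).le
        (hpos (r + 1) (by omega)).le hvK (hslow r (by omega)))

theorem tendsto_zero_of_summable_sq_succ {η : ℕ → ℝ} (h : Summable fun t => η (t + 1) ^ 2) :
    Tendsto η atTop (𝓝 0) := by
  rw [← tendsto_add_atTop_iff_nat 1]
  have := h.tendsto_atTop_zero.sqrt
  simp only [Real.sqrt_sq_eq_abs, Real.sqrt_zero] at this
  exact (tendsto_zero_iff_abs_tendsto_zero _).mpr this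

theorem exists_forall_le_of_le_add_mul {Δ η : ℕ → ℝ} {A c D : ℝ} (hA : 0 ≤ A) (hD : 0 ≤ D)
    (hη : Tendsto η atTop (𝓝 0))
    (hstep : ∀ t, 1 ≤ t → ∀ M, 0 ≤ M → (∀ s ≤ t, Δ s ≤ M) →
      Δ (t + 1) ≤ A + (c * M + D) * η t) :
    ∃ M, ∀ t, Δ t ≤ M := by
  obtain ⟨N, hN⟩ := eventually_atTop.mp <|
    ((hη.const_mul c).eventually_le_const (by norm_num : c * 0 < 1 / 2)).and
      ((hη.eventually_le_const one_pos).and (eventually_ge_atTop 1))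
  set M := 2 * (A + D) + ∑ s ∈ range (N + 1), |Δ s|
  have hM : 0 ≤ M := by positivity
  refine ⟨M, fun t => ?_⟩
  induction t using Nat.strong_induction_on with
  | _ t ih =>
    by_cases htN : t ≤ N
    · calc Δ t ≤ |Δ t| := le_abs_self _
        _ ≤ ∑ s ∈ range (N + 1), |Δ s| :=
          single_le_sum (fun s _ => abs_nonneg (Δ s)) (mem_range.mpr (by omega))
        _ ≤ M := by simp only [M]; linarith
    obtain ⟨u, rfl⟩ : ∃ u, t = u + 1 := ⟨t - 1, by omega⟩
    obtain ⟨hcη, hη1, hu⟩ := hN u (by omega)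
    calc Δ (u + 1) ≤ A + (c * M + D) * η u := hstep u hu M hM fun s hs => ih s (by omega)
      _ = A + M * (c * η u) + D * η u := by ring
      _ ≤ A + M * (1 / 2) + D * 1 := by gcongr
      _ ≤ M := by
        simp only [M]
        linarith [sum_nonneg fun s (_ : s ∈ range (N + 1)) => abs_nonneg (Δ s)]

theorem le_prod_mul_add_mul_of_recursion {K0 vk κ Ct0 Ct1 Ct3 M : ℝ} {η Δ : ℕ → ℝ} {t : ℕ}
    (hK0 : 0 < K0) (hvk : 0 ≤ vk) (hκ : 0 ≤ κ) (hCt0 : 0 ≤ Ct0) (hCt1 : 0 ≤ Ct1) (hM : 0 ≤ M)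
    (ht : 1 ≤ t) (hηpos : ∀ s, 1 ≤ s → 0 < η s) (hηκ : ∀ s, 2 ≤ s → η (s - 1) ≤ κ * η s)
    (hf : ∀ s, 1 ≤ s → 0 ≤ 1 - 2 * η s * K0)
    (hfstep : ∀ r, 1 ≤ r → η r * (1 - 2 * η (r + 1) * K0) ≤ η (r + 1) * (1 - K0 * η (r + 1)))
    (hΔnn : ∀ s, 1 ≤ s → 0 ≤ Δ s) (hΔM : ∀ s ≤ t, Δ s ≤ M)
    (hrec : Δ (t + 1) ≤ (∏ s ∈ Icc 1 t, (1 - 2 * η s * K0)) * Ct0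
        + (∑ s ∈ Icc 2 t,
            η (s - 1) * η s * (∏ r ∈ Icc (s + 1) t, (1 - 2 * η r * K0)) *
              (Ct1 * Δ s + (vk + K0) * Δ (s - 1)))
        + η t * (Δ t + Ct3)) :
    Δ (t + 1) ≤ (∏ s ∈ Icc 2 t, (1 - K0 * η s)) * Ct0
      + ((κ * (Ct1 + (vk + K0)) / K0 + 1) * M + Ct3) * η t := by
  have hfg : ∀ s, 1 ≤ s → 1 - 2 * η s * K0 ≤ 1 - K0 * η s := fun s hs => by
    nlinarith [hηpos s hs]
  have hg : ∀ s, 1 ≤ s → 0 ≤ 1 - K0 * η s := fun s hs => (hf s hs).trans (hfg s hs)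
  have hlead := prod_Icc_one_le_prod_Icc_two t hf (fun s hs => hfg s (by omega))
    (by nlinarith [hηpos 1 le_rfl] : 1 - 2 * η 1 * K0 ≤ 1)
  have hcarry : ∀ s ∈ Icc 2 t, η s * ∏ r ∈ Icc (s + 1) t, (1 - 2 * η r * K0)
      ≤ η t * ∏ r ∈ Icc (s + 1) t, (1 - K0 * η r) := fun s hs => by
    simp only [mem_Icc] at hs
    exact mul_prod_Icc_le_mul_prod_Icc hs.2 (fun r hr => hf r (by omega))
      (fun r hr => hg r (by omega)) (fun r hr => hfstep r (by omega))
  have hX : ∀ s ∈ Icc 2 t, 0 ≤ Ct1 * Δ s + (vk + K0) * Δ (s - 1)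
      ∧ Ct1 * Δ s + (vk + K0) * Δ (s - 1) ≤ (Ct1 + (vk + K0)) * M := fun s hs => by
    simp only [mem_Icc] at hs
    have := hΔnn s (by omega); have := hΔnn (s - 1) (by omega)
    have := hΔM s hs.2; have := hΔM (s - 1) (by omega)
    constructor <;> nlinarith
  have hconv := sum_Icc_mul_le_of_weight_bounds hK0 hκ (by positivity) (hηpos t ht).le
    (fun s hs => (hηpos s (by simp at hs; omega)).le)
    (fun s hs => (mul_nonneg (hηpos s (by simp at hs; omega)).le
      (prod_nonneg fun r hr => hf r (by simp at hs hr; omega))))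
    (fun s hs => (hX s hs).1) (fun s hs => (hX s hs).2) (fun s hs => hηκ s (mem_Icc.mp hs).1)
    hcarry (mul_sum_mul_prod_Icc_le_one (fun r hr => hg r (by omega)) t)
  have hlast : η t * (Δ t + Ct3) ≤ η t * (M + Ct3) := by
    gcongr
    exacts [(hηpos t ht).le, hΔM t le_rfl]
  have hlead' := mul_le_mul_of_nonneg_right hlead hCt0
  have e : κ * ((Ct1 + (vk + K0)) * M) / K0 * η t + η t * (M + Ct3)
      = ((κ * (Ct1 + (vk + K0)) / K0 + 1) * M + Ct3) * η t := by ring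
  linarith

theorem stmt11_general
    (K0 vk κ Ct0 Ct1 Ct3 : ℝ)
    (hK0 : 0 < K0) (hK0' : K0 ≤ 1)
    (hvk : 0 < vk) (hvk' : vk ≤ K0 / 2) (hκ : 1 ≤ κ)
    (hCt0 : 0 ≤ Ct0) (hCt1 : 0 ≤ Ct1) (hCt3 : 0 ≤ Ct3)
    (η : ℕ → ℝ)
    (hηpos : ∀ t, 1 ≤ t → 0 < η t)
    (hηmono : ∀ t, 1 ≤ t → η (t + 1) ≤ η t)
    (hηb2 : ∀ t, 1 ≤ t → η t ≤ K0 / (vk + 3 * K0))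
    (hηvar : ∀ t, 2 ≤ t → |1 / η t - 1 / η (t - 1)| ≤ vk)
    (hηκ : ∀ t, 2 ≤ t → η (t - 1) ≤ κ * η t)
    (hsum : Summable (fun t : ℕ => η (t + 1) ^ 2))
    (Δ : ℕ → ℝ)
    (hΔnn : ∀ t, 1 ≤ t → 0 ≤ Δ t)
    (hΔ1 : Δ 1 ≤ Ct0)
    (hrecur : ∀ t, 1 ≤ t →
      Δ (t + 1) ≤ (∏ s ∈ Finset.Icc 1 t, (1 - 2 * η s * K0)) * Ct0
        + (∑ s ∈ Finset.Icc 2 t,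
            η (s - 1) * η s * (∏ r ∈ Finset.Icc (s + 1) t, (1 - 2 * η r * K0)) *
              (Ct1 * Δ s + (vk + K0) * Δ (s - 1)))
        + η t * (Δ t + Ct3)) :
    (∃ M : ℝ, ∀ t, 1 ≤ t → Δ t ≤ M) ∧
    (∃ C : ℝ, ∀ t, 1 ≤ t →
      Δ (t + 1) ≤ (∏ s ∈ Finset.Icc 2 t, (1 - K0 * η s)) * Δ 1 + C * η t) := by
  have hf : ∀ s, 1 ≤ s → 0 ≤ 1 - 2 * η s * K0 := fun s hs => by
    have : η s * (vk + 3 * K0) ≤ K0 := (le_div_iff₀ (by positivity)).mp (hηb2 s hs)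
    nlinarith [hηpos s hs]
  have hg : ∀ s, 1 ≤ s → 0 ≤ 1 - K0 * η s ∧ 1 - K0 * η s ≤ 1 := fun s hs => by
    constructor <;> nlinarith [hηpos s hs, hf s hs]
  have hvkK0 : vk ≤ K0 := by linarith
  have hslow : ∀ t, 1 ≤ t → η t * (1 - vk * η (t + 1)) ≤ η (t + 1) := fun t ht =>
    mul_one_sub_mul_le_of_inv_sub_inv_le (hηpos t ht) (hηpos _ (by omega))
      (by simpa using (abs_le.mp (hηvar (t + 1) (by omega))).2)
  set c := κ * (Ct1 + (vk + K0)) / K0 + 1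
  have hmaster : ∀ t, 1 ≤ t → ∀ M, 0 ≤ M → (∀ s ≤ t, Δ s ≤ M) →
      Δ (t + 1) ≤ (∏ s ∈ Icc 2 t, (1 - K0 * η s)) * Ct0 + (c * M + Ct3) * η t :=
    fun t ht M hM hΔM =>
      le_prod_mul_add_mul_of_recursion hK0 hvk.le (by linarith) hCt0 hCt1 hM ht hηpos hηκ hf
        (fun r hr => mul_one_sub_two_mul_le (hηpos _ (by omega)).le (hηmono r hr) hvk.le hvkK0
          (hslow r hr)) hΔnn hΔM (hrecur t ht)
  have hprod_le_one : ∀ t, ∏ s ∈ Icc 2 t, (1 - K0 * η s) ≤ 1 := fun t =>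
    prod_le_one (fun s hs => (hg s (by simp at hs; omega)).1)
      fun s hs => (hg s (by simp at hs; omega)).2
  obtain ⟨B, hB⟩ := exists_forall_le_of_le_add_mul hCt0 hCt3
    (tendsto_zero_of_summable_sq_succ hsum) fun t ht M hM hΔM =>
      (hmaster t ht M hM hΔM).trans (by grw [mul_le_of_le_one_left hCt0 (hprod_le_one t)])
  refine ⟨⟨B, fun t _ => hB t⟩, c * B + Ct3 + (Ct0 - Δ 1) / η 1, fun t ht => ?_⟩
  have hprod := prod_Icc_two_one_sub_mul_le_div ht hηpos hvkK0 (fun s hs => (hg s hs).1) hslow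
  calc Δ (t + 1) ≤ _ := hmaster t ht B ((hΔnn 1 le_rfl).trans (hB 1)) fun s _ => hB s
    _ = (∏ s ∈ Icc 2 t, (1 - K0 * η s)) * Δ 1 + (∏ s ∈ Icc 2 t, (1 - K0 * η s)) * (Ct0 - Δ 1)
        + (c * B + Ct3) * η t := by ring
    _ ≤ (∏ s ∈ Icc 2 t, (1 - K0 * η s)) * Δ 1 + η t / η 1 * (Ct0 - Δ 1)
        + (c * B + Ct3) * η t := by gcongr
    _ = _ := by ring

/-- stability and convergence rate of a nonnegative real sequence
`Δ_t` satisfying the SAMCMC recursion-type inequality. -/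
theorem stmt11
    (K0 vk κ Ct0 Ct1 Ct3 : ℝ)
    (hK0 : 0 < K0) (hK0' : K0 ≤ 1)
    (hvk : 0 < vk) (hvk' : vk ≤ K0 / 2) (hκ : 1 ≤ κ)
    (hCt0 : 0 ≤ Ct0) (hCt1 : 0 ≤ Ct1) (hCt3 : 0 ≤ Ct3)
    (η : ℕ → ℝ)
    (hηpos : ∀ t, 1 ≤ t → 0 < η t)
    (hηmono : ∀ t, 1 ≤ t → η (t + 1) ≤ η t)
    -- η_t ≤ K0 / Ct1, with the convention K0 / Ct1 = ∞ if Ct1 = 0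
    (hηb1 : ∀ t, 1 ≤ t → η t * Ct1 ≤ K0)
    (hηb2 : ∀ t, 1 ≤ t → η t ≤ K0 / (vk + 3 * K0))
    (hηvar : ∀ t, 2 ≤ t → |1 / η t - 1 / η (t - 1)| ≤ vk)
    (hηκ : ∀ t, 2 ≤ t → η (t - 1) ≤ κ * η t)
    (hsum : Summable (fun t : ℕ => η (t + 1) ^ 2))
    (Δ : ℕ → ℝ)
    (hΔnn : ∀ t, 1 ≤ t → 0 ≤ Δ t)
    (hΔ1 : Δ 1 ≤ Ct0)
    (hrecur : ∀ t, 1 ≤ t →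
      Δ (t + 1) ≤ (∏ s ∈ Finset.Icc 1 t, (1 - 2 * η s * K0)) * Ct0
        + (∑ s ∈ Finset.Icc 2 t,
            η (s - 1) * η s * (∏ r ∈ Finset.Icc (s + 1) t, (1 - 2 * η r * K0)) *
              (Ct1 * Δ s + (vk + K0) * Δ (s - 1)))
        + η t * (Δ t + Ct3)) :
    (∃ M : ℝ, ∀ t, 1 ≤ t → Δ t ≤ M) ∧
    (∃ C : ℝ, ∀ t, 1 ≤ t →
      Δ (t + 1) ≤ (∏ s ∈ Finset.Icc 2 t, (1 - K0 * η s)) * Δ 1 + C * η t) :=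
  stmt11_general K0 vk κ Ct0 Ct1 Ct3 hK0 hK0' hvk hvk' hκ hCt0 hCt1 hCt3 η hηpos hηmono hηb2 hηvar
    hηκ hsum Δ hΔnn hΔ1 hrecur
end

section
/- If theta_t converges to theta_star and eta_t * h_t converges to 0 as t tends to infinity, then omega_t = 0 for all sufficiently large t; consequently (1/sqrt(T)) * sum_{t=1}^{T} ||omega_t|| converges to 0 as T tends to infinity. -/
open Filter

/-- if the projected iterates converge to an interior point and the
scaled updates vanish, then the projection residuals `ω_t` are eventually zero,
and `(1/√T) ∑_{t=1}^{T} ‖ω_t‖ → 0`. -/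
theorem stmt14
    {d : ℕ}
    (Θ : Set (EuclideanSpace ℝ (Fin d)))
    (hΘne : Θ.Nonempty) (hΘclosed : IsClosed Θ) (hΘconv : Convex ℝ Θ)
    -- the metric projection onto Θ
    (proj : EuclideanSpace ℝ (Fin d) → EuclideanSpace ℝ (Fin d))
    (hproj : ∀ z, proj z ∈ Θ ∧ ∀ u ∈ Θ, ‖z - proj z‖ ≤ ‖z - u‖)
    (θstar : EuclideanSpace ℝ (Fin d)) (hθstar : θstar ∈ interior Θ)
    (η : ℕ → ℝ) (hη : ∀ t, 1 ≤ t → 0 < η t)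
    (h : ℕ → EuclideanSpace ℝ (Fin d))
    (θ : ℕ → EuclideanSpace ℝ (Fin d)) (hθ1 : θ 1 ∈ Θ)
    (hrec : ∀ t, 1 ≤ t → θ (t + 1) = proj (θ t - η t • h t))
    (w : ℕ → EuclideanSpace ℝ (Fin d))
    (hw : ∀ t, 1 ≤ t → w t = (η t)⁻¹ • (θ (t + 1) - θ t) + h t)
    (hθconv : Tendsto θ atTop (nhds θstar))
    (hhconv : Tendsto (fun t => η t • h t) atTop
      (nhds (0 : EuclideanSpace ℝ (Fin d)))) :
    (∃ N : ℕ, ∀ t, N ≤ t → w t = 0) ∧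
    Tendsto (fun T : ℕ => (1 / Real.sqrt T) * ∑ t ∈ Finset.Icc 1 T, ‖w t‖)
      atTop (nhds 0) := by
  have hz : Tendsto (fun t => θ t - η t • h t) atTop (nhds θstar) := by
    simpa using hθconv.sub hhconv
  have hmem : ∀ᶠ t in atTop, θ t - η t • h t ∈ Θ :=
    hz.eventually_mem (mem_interior_iff_mem_nhds.mp hθstar)
  obtain ⟨N, hN⟩ := eventually_atTop.mp hmem
  set N' := max N 1 with hN'
  have key : ∀ t, N' ≤ t → w t = 0 := by
    intro t ht
    have ht1 : 1 ≤ t := le_trans (le_max_right N 1) ht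
    have htN : N ≤ t := le_trans (le_max_left N 1) ht
    have hzt : θ t - η t • h t ∈ Θ := hN t htN
    have hfix : proj (θ t - η t • h t) = θ t - η t • h t := by
      have h0 := (hproj (θ t - η t • h t)).2 _ hzt
      rw [sub_self, norm_zero] at h0
      have h1 : θ t - η t • h t - proj (θ t - η t • h t) = 0 := norm_le_zero_iff.mp h0
      exact (sub_eq_zero.mp h1).symm
    rw [hw t ht1, hrec t ht1, hfix]
    have h2 : θ t - η t • h t - θ t = -(η t • h t) := by abel
    rw [h2, smul_neg, smul_smul, inv_mul_cancel₀ (ne_of_gt (hη t ht1)), one_smul,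
      neg_add_cancel]
  refine ⟨⟨N', key⟩, ?_⟩
  set C := ∑ t ∈ Finset.Icc 1 N', ‖w t‖ with hC
  have heq : ∀ᶠ T : ℕ in atTop, (1 / Real.sqrt T) * ∑ t ∈ Finset.Icc 1 T, ‖w t‖
      = (1 / Real.sqrt T) * C := by
    filter_upwards [eventually_ge_atTop N'] with T hT
    congr 1
    rw [hC]
    refine (Finset.sum_subset (Finset.Icc_subset_Icc_right hT) ?_).symm
    intro t ht hnt
    simp only [Finset.mem_Icc] at ht hnt
    have : N' < t := by omega
    rw [key t this.le, norm_zero]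
  have hlim : Tendsto (fun T : ℕ => (1 / Real.sqrt T) * C) atTop (nhds 0) := by
    have h1 : Tendsto (fun T : ℕ => Real.sqrt T) atTop atTop := by
      rw [tendsto_atTop]
      intro b
      filter_upwards [eventually_ge_atTop ⌈b ^ 2⌉₊] with T hT
      calc b ≤ Real.sqrt (b ^ 2) := by
              rw [Real.sqrt_sq_eq_abs]; exact le_abs_self b
        _ ≤ Real.sqrt T :=
            Real.sqrt_le_sqrt (le_trans (Nat.le_ceil _) (by exact_mod_cast hT))
    have h2 : Tendsto (fun T : ℕ => 1 / Real.sqrt T) atTop (nhds 0) := by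
      simpa [one_div, Pi.inv_def] using h1.inv_tendsto_atTop
    simpa using h2.mul_const C
  exact hlim.congr' (heq.mono fun T hT => hT.symm)
end
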